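/- arXiv:0807.3612 — 8 statements merged into one kernel-verified Lean document; each statement's English description precedes it below -/
import Mathlib

section
/- Let Q₀ : ℳ → ℳ satisfy Hypotheses 1 and let c ∈ ℝ. Suppose there exists a sequence (vₙ)ₙ₌₀^∞ ⊂ ℳ such that (Q₀[vₙ])(x − c) ≤ vₙ₊₁(x) for all n ≥ 0 and all x ∈ ℝ, the function x ↦ inf_{n≥0} vₙ(x) is not identically 0, and the function x ↦ liminf_{n→∞} vₙ(x) is not identically 1. Then there exists ψ ∈ ℳ such that (Q₀[ψ])(x − c) = ψ(x) for all x ∈ ℝ, lim_{x→−∞} ψ(x) = 0 and lim_{x→+∞} ψ(x) = 1. -/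
open MeasureTheory Filter Topology

/-- `ℳ`: monotone nondecreasing, left continuous functions with values in `[0,1]`. -/
def IsM (u : ℝ → ℝ) : Prop :=
  Monotone u ∧ (∀ x : ℝ, ContinuousWithinAt u (Set.Iic x) x) ∧
    ∀ x : ℝ, u x ∈ Set.Icc (0 : ℝ) 1

/-- Hypotheses 1 for a map `Q : ℳ → ℳ`. -/
structure Hyp1 (Q : (ℝ → ℝ) → (ℝ → ℝ)) : Prop where
  maps : ∀ u, IsM u → IsM (Q u)
  cont : ∀ (uk : ℕ → ℝ → ℝ) (u : ℝ → ℝ), (∀ k, IsM (uk k)) → IsM u →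
    (∀ a b : ℝ, TendstoUniformlyOn uk u atTop (Set.Icc a b)) →
    ∀ᵐ x : ℝ ∂volume, Tendsto (fun k => Q (uk k) x) atTop (𝓝 (Q u x))
  mono : ∀ u₁ u₂, IsM u₁ → IsM u₂ → u₁ ≤ u₂ → Q u₁ ≤ Q u₂
  transl : ∀ (x₀ : ℝ) (u : ℝ → ℝ), IsM u →
    Q (fun x => u (x - x₀)) = fun x => Q u (x - x₀)
  monostable : ∀ α : ℝ, 0 < α → α < 1 → ∀ x : ℝ, α < Q (fun _ => α) x

lemma IsM.nonneg {u : ℝ → ℝ} (hu : IsM u) (x : ℝ) : 0 ≤ u x := (hu.2.2 x).1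
lemma IsM.le_one {u : ℝ → ℝ} (hu : IsM u) (x : ℝ) : u x ≤ 1 := (hu.2.2 x).2

namespace YG

/-! ### Basic facts about the class `ℳ` -/

lemma isM_const {α : ℝ} (h0 : 0 ≤ α) (h1 : α ≤ 1) : IsM (fun _ => α) :=
  ⟨monotone_const, fun _ => continuousWithinAt_const, fun _ => ⟨h0, h1⟩⟩

lemma isM_max {u w : ℝ → ℝ} (hu : IsM u) (hw : IsM w) : IsM (fun x => max (u x) (w x)) := by
  refine ⟨fun a b hab => max_le_max (hu.1 hab) (hw.1 hab), fun x => (hu.2.1 x).max (hw.2.1 x),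
    fun x => ⟨le_max_of_le_left (hu.nonneg x), max_le (hu.le_one x) (hw.le_one x)⟩⟩

lemma isM_min {u w : ℝ → ℝ} (hu : IsM u) (hw : IsM w) : IsM (fun x => min (u x) (w x)) := by
  refine ⟨fun a b hab => min_le_min (hu.1 hab) (hw.1 hab), fun x => (hu.2.1 x).min (hw.2.1 x),
    fun x => ⟨le_min (hu.nonneg x) (hw.nonneg x), min_le_of_left_le (hu.le_one x)⟩⟩

lemma isM_translate {u : ℝ → ℝ} (hu : IsM u) (t : ℝ) : IsM (fun x => u (x - t)) := by
  refine ⟨fun a b hab => hu.1 (by linarith), fun x => ?_, fun x => hu.2.2 _⟩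
  have h1 : ContinuousWithinAt u (Set.Iic (x - t)) (x - t) := hu.2.1 (x - t)
  have hmap : Tendsto (fun y : ℝ => y - t) (𝓝[Set.Iic x] x) (𝓝[Set.Iic (x - t)] (x - t)) := by
    refine tendsto_nhdsWithin_of_tendsto_nhds_of_eventually_within _ ?_ ?_
    · exact ((continuous_id.sub continuous_const).tendsto x).mono_left nhdsWithin_le_nhds
    · exact eventually_mem_nhdsWithin.mono (fun y hy => sub_le_sub_right hy t)
  exact h1.tendsto.comp hmap

/-- clip from below: `max (u x - ε) 0`. -/
lemma isM_clipSub {u : ℝ → ℝ} (hu : IsM u) {ε : ℝ} (hε : 0 ≤ ε) :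
    IsM (fun x => max (u x - ε) 0) := by
  refine ⟨fun a b hab => max_le_max (by linarith [hu.1 hab]) le_rfl,
    fun x => ((hu.2.1 x).sub continuousWithinAt_const).max continuousWithinAt_const,
    fun x => ⟨le_max_right _ _, max_le (by linarith [hu.le_one x]) zero_le_one⟩⟩

/-- clip from above: `min (u x + ε) 1`. -/
lemma isM_clipAdd {u : ℝ → ℝ} (hu : IsM u) {ε : ℝ} (hε : 0 ≤ ε) :
    IsM (fun x => min (u x + ε) 1) := by
  refine ⟨fun a b hab => min_le_min (by linarith [hu.1 hab]) le_rfl,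
    fun x => ((hu.2.1 x).add continuousWithinAt_const).min continuousWithinAt_const,
    fun x => ⟨le_min (by linarith [hu.nonneg x]) zero_le_one, min_le_right _ _⟩⟩

/-- gate at `p`: vanishes on `(-∞, p]`, equals `f` on `(p, ∞)`. -/
noncomputable def gate (p : ℝ) (f : ℝ → ℝ) : ℝ → ℝ := fun x => if p < x then f x else 0

lemma gate_le {p : ℝ} {f : ℝ → ℝ} (hf : ∀ x, 0 ≤ f x) : ∀ x, gate p f x ≤ f x := by
  intro x; unfold gate; split <;> simp [hf x]

lemma gate_eq_of_lt {p : ℝ} {f : ℝ → ℝ} {x : ℝ} (h : p < x) : gate p f x = f x := if_pos h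

lemma isM_gate {f : ℝ → ℝ} (hf : IsM f) (p : ℝ) : IsM (gate p f) := by
  have hmono : Monotone (gate p f) := by
    intro a b hab
    unfold gate
    rcases le_or_gt a p with ha | ha
    · rw [if_neg (not_lt.2 ha)]
      split
      · exact hf.nonneg b
      · exact le_rfl
    · rw [if_pos ha, if_pos (lt_of_lt_of_le ha hab)]; exact hf.1 hab
  refine ⟨hmono, fun x => ?_, fun x => ?_⟩
  · rcases le_or_gt x p with hx | hx
    · have hx0 : gate p f x = 0 := if_neg (not_lt.2 hx)
      have : ∀ y ∈ Set.Iic x, gate p f y = 0 := by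
        intro y hy; exact if_neg (not_lt.2 (le_trans (le_trans hy hx) le_rfl))
      rw [ContinuousWithinAt, hx0]
      refine Tendsto.congr' ?_ tendsto_const_nhds
      exact (eventually_mem_nhdsWithin).mono (fun y hy => (this y hy).symm)
    · have hx0 : gate p f x = f x := if_pos hx
      rw [ContinuousWithinAt, hx0]
      have hev : ∀ᶠ y in 𝓝[Set.Iic x] x, gate p f y = f y := by
        have h1 : Set.Ioi p ∈ 𝓝[Set.Iic x] x :=
          nhdsWithin_le_nhds (Ioi_mem_nhds hx)
        filter_upwards [h1] with y hy
        exact if_pos hy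
      exact Tendsto.congr' (hev.mono fun y hy => hy.symm) (hf.2.1 x)
  · constructor
    · unfold gate; split; exacts [hf.nonneg x, le_rfl]
    · unfold gate; split; exacts [hf.le_one x, zero_le_one]

/-- gate to 1 after `q`: equals `f` on `(-∞, q]`, equals `1` on `(q, ∞)`. -/
noncomputable def gate1 (q : ℝ) (f : ℝ → ℝ) : ℝ → ℝ := fun x => if q < x then 1 else f x

lemma isM_gate1 {f : ℝ → ℝ} (hf : IsM f) (q : ℝ) : IsM (gate1 q f) := by
  have hmono : Monotone (gate1 q f) := by
    intro a b hab
    unfold gate1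
    rcases le_or_gt a q with ha | ha
    · rw [if_neg (not_lt.2 ha)]
      split
      · exact hf.le_one a
      · exact hf.1 hab
    · rw [if_pos ha, if_pos (lt_of_lt_of_le ha hab)]
  refine ⟨hmono, fun x => ?_, fun x => ?_⟩
  · rcases le_or_gt x q with hx | hx
    · have hx0 : gate1 q f x = f x := if_neg (not_lt.2 hx)
      rw [ContinuousWithinAt, hx0]
      have hev : ∀ᶠ y in 𝓝[Set.Iic x] x, gate1 q f y = f y := by
        refine (eventually_mem_nhdsWithin).mono (fun y hy => ?_)
        exact if_neg (not_lt.2 (le_trans hy hx))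
      exact Tendsto.congr' (hev.mono fun y hy => hy.symm) (hf.2.1 x)
    · have hx0 : gate1 q f x = 1 := if_pos hx
      rw [ContinuousWithinAt, hx0]
      have hev : ∀ᶠ y in 𝓝[Set.Iic x] x, gate1 q f y = 1 := by
        have h1 : Set.Ioi q ∈ 𝓝[Set.Iic x] x := nhdsWithin_le_nhds (Ioi_mem_nhds hx)
        filter_upwards [h1] with y hy
        exact if_pos hy
      exact Tendsto.congr' (hev.mono fun y hy => hy.symm) tendsto_const_nhds
  · constructor
    · unfold gate1; split; exacts [zero_le_one, hf.nonneg x]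
    · unfold gate1; split; exacts [le_rfl, hf.le_one x]

/-- the step function `φ_{α,y}`. -/
noncomputable def stepf (α y : ℝ) : ℝ → ℝ := gate y (fun _ => α)

lemma isM_stepf {α : ℝ} (h0 : 0 ≤ α) (h1 : α ≤ 1) (y : ℝ) : IsM (stepf α y) :=
  isM_gate (isM_const h0 h1) y

lemma stepf_le {α y : ℝ} (h0 : 0 ≤ α) (x : ℝ) : stepf α y x ≤ α := by
  unfold stepf gate; split <;> simp [h0]

lemma stepf_of_lt {α y x : ℝ} (h : y < x) : stepf α y x = α := if_pos h
lemma stepf_nonneg {α y : ℝ} (h0 : 0 ≤ α) (x : ℝ) : 0 ≤ stepf α y x := by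
  unfold stepf gate; split <;> simp [h0]

/-- a pointwise supremum of a sequence in `ℳ` is in `ℳ`. -/
lemma isM_iSup {w : ℕ → ℝ → ℝ} (hw : ∀ n, IsM (w n)) : IsM (fun x => ⨆ n, w n x) := by
  have hbdd : ∀ x, BddAbove (Set.range fun n => w n x) := by
    intro x; exact ⟨1, by rintro r ⟨n, rfl⟩; exact (hw n).le_one x⟩
  have hmono : Monotone (fun x => ⨆ n, w n x) := by
    intro a b hab
    exact ciSup_le fun n => le_trans ((hw n).1 hab) (le_ciSup (hbdd b) n)
  refine ⟨hmono, fun x => ?_, fun x => ?_⟩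
  · rw [ContinuousWithinAt]
    rw [tendsto_order]
    constructor
    · intro a ha
      obtain ⟨n, hn⟩ := (lt_ciSup_iff (hbdd x)).1 ha
      have hcont := (hw n).2.1 x
      have h2 : ∀ᶠ y in 𝓝[Set.Iic x] x, a < w n y :=
        hcont.eventually (eventually_gt_nhds hn)
      filter_upwards [h2] with y hy
      exact lt_of_lt_of_le hy (le_ciSup (hbdd y) n)
    · intro b hb
      filter_upwards [eventually_mem_nhdsWithin] with y (hy : y ≤ x)
      exact lt_of_le_of_lt (hmono hy) hb
  · exact ⟨le_trans ((hw 0).nonneg x) (le_ciSup (hbdd x) 0), ciSup_le fun n => (hw n).le_one x⟩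

/-- a.e. inequality between two left-continuous monotone functions upgrades to everywhere. -/
lemma le_of_ae_le {u w : ℝ → ℝ} (hu : IsM u) (hw : IsM w)
    (h : ∀ᵐ x : ℝ ∂volume, u x ≤ w x) : ∀ x, u x ≤ w x := by
  intro x
  set S := {y : ℝ | u y ≤ w y} with hS
  have hcompl : volume Sᶜ = 0 := h
  have hpick : ∀ n : ℕ, ∃ y, y ∈ S ∧ x - (1 : ℝ)/(n+1) < y ∧ y ≤ x := by
    intro n
    by_contra hcon
    push_neg at hcon
    have hsub : Set.Ioc (x - 1/(n+1)) x ⊆ Sᶜ := by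
      intro y hy hyS
      exact absurd hy.2 (not_le.2 (hcon y hyS hy.1))
    have hnull : volume (Set.Ioc (x - 1/(n+1)) x) = 0 := measure_mono_null hsub hcompl
    rw [Real.volume_Ioc, sub_sub_cancel, ENNReal.ofReal_eq_zero] at hnull
    have hpos : (0:ℝ) < 1/(n+1) := by positivity
    linarith
  choose y hyS hylt hyle using hpick
  have htend : Tendsto y atTop (𝓝[Set.Iic x] x) := by
    refine tendsto_nhdsWithin_of_tendsto_nhds_of_eventually_within _ ?_
      (Eventually.of_forall fun n => hyle n)
    have h1 : Tendsto (fun n : ℕ => x - (1:ℝ)/(n+1)) atTop (𝓝 (x - 0)) :=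
      tendsto_const_nhds.sub (tendsto_one_div_add_atTop_nhds_zero_nat)
    rw [sub_zero] at h1
    exact tendsto_of_tendsto_of_tendsto_of_le_of_le h1 tendsto_const_nhds
      (fun n => (hylt n).le) (fun n => hyle n)
  have hu' : Tendsto (fun n => u (y n)) atTop (𝓝 (u x)) := (hu.2.1 x).tendsto.comp htend
  have hw' : Tendsto (fun n => w (y n)) atTop (𝓝 (w x)) := (hw.2.1 x).tendsto.comp htend
  exact le_of_tendsto_of_tendsto hu' hw' (Eventually.of_forall fun n => hyS n)

lemma eq_of_ae_eq {u w : ℝ → ℝ} (hu : IsM u) (hw : IsM w)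
    (h : ∀ᵐ x : ℝ ∂volume, u x = w x) : ∀ x, u x = w x := by
  intro x
  have h1 := le_of_ae_le hu hw (h.mono fun x hx => hx.le)
  have h2 := le_of_ae_le hw hu (h.mono fun x hx => hx.ge)
  exact le_antisymm (h1 x) (h2 x)

lemma ae_shift (t : ℝ) {P : ℝ → Prop} (h : ∀ᵐ x : ℝ ∂volume, P x) :
    ∀ᵐ x : ℝ ∂volume, P (x - t) :=
  (measurePreserving_sub_right volume t).quasiMeasurePreserving.ae h

/-! ### The operator `R`, constants, the rung lemma and the chain lemma -/

section WithQ

variable {Q : (ℝ → ℝ) → (ℝ → ℝ)}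

/-- `R u = Q u (· - c)`. -/
noncomputable def Rop (Q : (ℝ → ℝ) → (ℝ → ℝ)) (c : ℝ) (f : ℝ → ℝ) : ℝ → ℝ :=
  fun x => Q f (x - c)

lemma isM_Rop (hQ : Hyp1 Q) (c : ℝ) {f : ℝ → ℝ} (hf : IsM f) : IsM (Rop Q c f) :=
  isM_translate (hQ.maps f hf) c

lemma Rop_mono (hQ : Hyp1 Q) (c : ℝ) {f g : ℝ → ℝ} (hf : IsM f) (hg : IsM g)
    (hle : ∀ x, f x ≤ g x) : ∀ x, Rop Q c f x ≤ Rop Q c g x :=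
  fun x => hQ.mono f g hf hg hle (x - c)

/-- `Q` of a constant is constant. -/
lemma q_const_apply (hQ : Hyp1 Q) {α : ℝ} (h0 : 0 ≤ α) (h1 : α ≤ 1) (x : ℝ) :
    Q (fun _ => α) x = Q (fun _ => α) 0 := by
  have h := congrFun (hQ.transl x (fun _ => α) (isM_const h0 h1)) x
  simpa using h

/-- the value of `Q` on the constant `α`. -/
noncomputable def gQ (Q : (ℝ → ℝ) → (ℝ → ℝ)) (α : ℝ) : ℝ := Q (fun _ => α) 0

lemma gQ_lt (hQ : Hyp1 Q) {α : ℝ} (h0 : 0 < α) (h1 : α < 1) : α < gQ Q α :=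
  hQ.monostable α h0 h1 0

lemma gQ_le_one (hQ : Hyp1 Q) {α : ℝ} (h0 : 0 ≤ α) (h1 : α ≤ 1) : gQ Q α ≤ 1 :=
  (hQ.maps _ (isM_const h0 h1)).le_one 0

lemma gQ_nonneg (hQ : Hyp1 Q) {α : ℝ} (h0 : 0 ≤ α) (h1 : α ≤ 1) : 0 ≤ gQ Q α :=
  (hQ.maps _ (isM_const h0 h1)).nonneg 0

/-- continuity of `gQ` along convergent sequences of constants. -/
lemma gQ_tendsto (hQ : Hyp1 Q) {s : ℕ → ℝ} {l : ℝ}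
    (hs0 : ∀ j, 0 ≤ s j) (hs1 : ∀ j, s j ≤ 1) (hl0 : 0 ≤ l) (hl1 : l ≤ 1)
    (h : Tendsto s atTop (𝓝 l)) :
    Tendsto (fun j => gQ Q (s j)) atTop (𝓝 (gQ Q l)) := by
  have hcont := hQ.cont (fun j _ => s j) (fun _ => l) (fun j => isM_const (hs0 j) (hs1 j))
    (isM_const hl0 hl1) ?_
  · obtain ⟨x₁, hx₁⟩ := hcont.exists
    have he : ∀ j, Q (fun _ => s j) x₁ = gQ Q (s j) := fun j => q_const_apply hQ (hs0 j) (hs1 j) x₁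
    have he' : Q (fun _ => l) x₁ = gQ Q l := q_const_apply hQ hl0 hl1 x₁
    rw [he'] at hx₁
    exact hx₁.congr (fun j => he j)
  · intro a b
    rw [Metric.tendstoUniformlyOn_iff]
    intro ε hε
    have := (Metric.tendsto_nhds.1 h) ε hε
    filter_upwards [this] with j hj x _
    simpa [dist_comm] using hj

/-- The rung lemma: one application of `R` lifts a step of height `α` to height
`gQ α - ε`, with a shift `τ = τ(α, ε)` independent of the position of the step. -/
lemma rung (hQ : Hyp1 Q) (c : ℝ) {α ε : ℝ} (hα : 0 < α) (hα1 : α < 1) (hε : 0 < ε) :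
    ∃ τ : ℝ, ∀ y x : ℝ, y + τ < x → gQ Q α - ε ≤ Rop Q c (stepf α y) x := by
  have hstep : ∀ y : ℝ, IsM (stepf α y) := isM_stepf hα.le hα1.le
  -- uniform convergence of stepf α (-j) to the constant α on compacts
  have hcont := hQ.cont (fun j => stepf α (-(j:ℝ))) (fun _ => α) (fun j => hstep _)
    (isM_const hα.le hα1.le) ?_
  · obtain ⟨x₁, hx₁⟩ := hcont.exists
    have he' : Q (fun _ => α) x₁ = gQ Q α := q_const_apply hQ hα.le hα1.le x₁
    rw [he'] at hx₁
    have : ∀ᶠ j : ℕ in atTop, gQ Q α - ε < Q (stepf α (-(j:ℝ))) x₁ :=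
      hx₁.eventually (eventually_gt_nhds (by linarith))
    obtain ⟨J, hJ⟩ := this.exists
    refine ⟨(J : ℝ) + x₁ + c, ?_⟩
    intro y x hyx
    have hshift : stepf α y = fun w => stepf α (-(J:ℝ)) (w - (y + J)) := by
      funext w
      show (if y < w then α else 0) = (if -(J:ℝ) < w - (y + J) then α else 0)
      have : (y < w) ↔ (-(J:ℝ) < w - (y + J)) := by
        constructor <;> intro <;> linarith
      exact if_congr this rfl rfl
    have htr := hQ.transl (y + J) (stepf α (-(J:ℝ))) (hstep _)
    have hQeq : ∀ z : ℝ, Q (stepf α y) z = Q (stepf α (-(J:ℝ))) (z - (y + J)) := by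
      intro z
      rw [hshift]
      exact congrFun htr z
    have hmonoQ : Monotone (Q (stepf α (-(J:ℝ)))) := (hQ.maps _ (hstep _)).1
    show gQ Q α - ε ≤ Q (stepf α y) (x - c)
    rw [hQeq]
    refine le_trans hJ.le (hmonoQ ?_)
    linarith
  · intro a b
    rw [Metric.tendstoUniformlyOn_iff]
    intro ε' hε'
    obtain ⟨J, hJ⟩ := exists_nat_gt (-a)
    rw [eventually_atTop]
    refine ⟨J, fun j hj x hx => ?_⟩
    have : stepf α (-(j:ℝ)) x = α := by
      apply stepf_of_lt
      have : (J:ℝ) ≤ (j:ℝ) := Nat.cast_le.2 hj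
      have hax : a ≤ x := hx.1
      linarith
    simpa [this] using hε'

/-- the chain `s₀ = b`, `s_{j+1} = (s_j + gQ s_j)/2`. -/
noncomputable def chain (Q : (ℝ → ℝ) → (ℝ → ℝ)) (b : ℝ) : ℕ → ℝ
  | 0 => b
  | (n+1) => (chain Q b n + gQ Q (chain Q b n)) / 2

lemma chain_mem (hQ : Hyp1 Q) {b : ℝ} (hb : 0 < b) (hb1 : b < 1) :
    ∀ n, 0 < chain Q b n ∧ chain Q b n < 1 := by
  intro n
  induction n with
  | zero => exact ⟨hb, hb1⟩
  | succ n ih =>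
    have h1 : chain Q b n < gQ Q (chain Q b n) := gQ_lt hQ ih.1 ih.2
    have h2 : gQ Q (chain Q b n) ≤ 1 := gQ_le_one hQ ih.1.le ih.2.le
    constructor
    · show 0 < (chain Q b n + gQ Q (chain Q b n)) / 2
      linarith
    · show (chain Q b n + gQ Q (chain Q b n)) / 2 < 1
      linarith

lemma chain_mono (hQ : Hyp1 Q) {b : ℝ} (hb : 0 < b) (hb1 : b < 1) :
    Monotone (chain Q b) := by
  have : ∀ n, chain Q b n ≤ chain Q b (n+1) := by
    intro n
    have h := chain_mem hQ hb hb1 n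
    have h1 : chain Q b n < gQ Q (chain Q b n) := gQ_lt hQ h.1 h.2
    show chain Q b n ≤ (chain Q b n + gQ Q (chain Q b n)) / 2
    linarith
  exact monotone_nat_of_le_succ this

/-- the chain converges to 1: every level `< 1` is eventually exceeded. -/
lemma chain_reaches (hQ : Hyp1 Q) {b : ℝ} (hb : 0 < b) (hb1 : b < 1) {μ : ℝ} (hμ : μ < 1) :
    ∃ n, μ < chain Q b n := by
  have hmem := chain_mem hQ hb hb1
  have hbdd : BddAbove (Set.range (chain Q b)) := ⟨1, by rintro r ⟨n, rfl⟩; exact (hmem n).2.le⟩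
  set l := ⨆ n, chain Q b n with hl
  have hmono := chain_mono hQ hb hb1
  have htend : Tendsto (chain Q b) atTop (𝓝 l) := tendsto_atTop_ciSup hmono hbdd
  have hl0 : 0 < l := lt_of_lt_of_le (hmem 0).1 (le_ciSup hbdd 0)
  have hl1 : l ≤ 1 := ciSup_le fun n => (hmem n).2.le
  have hlt : ∀ n, chain Q b n ≤ l := fun n => le_ciSup hbdd n
  -- limit equation
  have hg : Tendsto (fun n => gQ Q (chain Q b n)) atTop (𝓝 (gQ Q l)) :=
    gQ_tendsto hQ (fun j => (hmem j).1.le) (fun j => (hmem j).2.le) hl0.le hl1 htend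
  have htend' : Tendsto (fun n => chain Q b (n+1)) atTop (𝓝 l) :=
    htend.comp (tendsto_add_atTop_nat 1)
  have htend'' : Tendsto (fun n => (chain Q b n + gQ Q (chain Q b n))/2) atTop
      (𝓝 ((l + gQ Q l)/2)) := (htend.add hg).div_const 2
  have heq : l = (l + gQ Q l)/2 := tendsto_nhds_unique htend' htend''
  have hgl : gQ Q l = l := by linarith
  -- conclude l = 1
  have hl1' : l = 1 := by
    by_contra hne
    have hlt1 : l < 1 := lt_of_le_of_ne hl1 hne
    have := gQ_lt hQ hl0 hlt1
    linarith
  rw [hl1'] at htend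
  obtain ⟨n, hn⟩ := (htend.eventually (eventually_gt_nhds hμ)).exists
  exact ⟨n, hn⟩

end WithQ

/-! ### a.e. continuity of `Q` along pointwise a.e. convergent sequences in `ℳ` -/

lemma dense_of_ae {D : Set ℝ} (hD : ∀ᵐ x : ℝ ∂volume, x ∈ D) {a b : ℝ} (hab : a < b) :
    ∃ y, y ∈ D ∧ a < y ∧ y < b := by
  by_contra hcon
  push_neg at hcon
  have hsub : Set.Ioo a b ⊆ Dᶜ := by
    intro y hy hyD
    exact absurd hy.2 (not_lt.2 (hcon y hyD hy.1))
  have hnull : volume (Set.Ioo a b) = 0 := measure_mono_null hsub hD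
  rw [Real.volume_Ioo, ENNReal.ofReal_eq_zero] at hnull
  linarith

lemma isM_translate_add {u : ℝ → ℝ} (hu : IsM u) (t : ℝ) : IsM (fun x => u (x + t)) := by
  have h := isM_translate hu (-t)
  have he : (fun x => u (x - -t)) = (fun x => u (x + t)) := by
    funext x; rw [sub_neg_eq_add]
  rwa [he] at h

/-- left-continuity along the standard approximating sequence from the left. -/
lemma tendsto_left_seq {u : ℝ → ℝ} (hu : IsM u) (x : ℝ) :
    Tendsto (fun m : ℕ => u (x - 1/(m+1))) atTop (𝓝 (u x)) := by
  have hseq : Tendsto (fun m : ℕ => x - 1/(m+1)) atTop (𝓝[Set.Iic x] x) := by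
    refine tendsto_nhdsWithin_of_tendsto_nhds_of_eventually_within _ ?_ ?_
    · have h1 : Tendsto (fun m : ℕ => x - 1/(m+1)) atTop (𝓝 (x - 0)) :=
        tendsto_const_nhds.sub tendsto_one_div_add_atTop_nhds_zero_nat
      rwa [sub_zero] at h1
    · refine Eventually.of_forall (fun m => ?_)
      have : (0:ℝ) < 1/(m+1) := by positivity
      simp only [Set.mem_Iic]; linarith
  exact (hu.2.1 x).tendsto.comp hseq

lemma tendsto_right_seq {w : ℝ → ℝ} (hw : ContinuousAt w x) :
    Tendsto (fun m : ℕ => w (x + 1/(m+1))) atTop (𝓝 (w x)) := by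
  have hseq : Tendsto (fun m : ℕ => x + 1/(m+1)) atTop (𝓝 x) := by
    have h1 : Tendsto (fun m : ℕ => x + 1/(m+1)) atTop (𝓝 (x + 0)) :=
      tendsto_const_nhds.add tendsto_one_div_add_atTop_nhds_zero_nat
    rwa [add_zero] at h1
  exact hw.tendsto.comp hseq

/-- the lower comparison function. -/
noncomputable def lowf (u : ℝ → ℝ) (δ ε p q : ℝ) : ℝ → ℝ :=
  gate p (fun x => min (max (u (x - δ) - ε) 0) (max (u (q - δ) - ε) 0))

/-- the upper comparison function. -/
noncomputable def uppf (u : ℝ → ℝ) (δ ε p q : ℝ) : ℝ → ℝ :=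
  gate1 q (fun x => max (min (u (x + δ) + ε) 1) (min (u (p + δ) + ε) 1))

lemma isM_lowf {u : ℝ → ℝ} (hu : IsM u) {δ ε : ℝ} (hδ : 0 ≤ δ) (hε : 0 ≤ ε) (p q : ℝ) :
    IsM (lowf u δ ε p q) := by
  refine isM_gate (isM_min (isM_clipSub (isM_translate hu δ) hε) (isM_const ?_ ?_)) p
  · exact le_max_right _ _
  · exact max_le (by linarith [hu.le_one (q - δ)]) zero_le_one

lemma isM_uppf {u : ℝ → ℝ} (hu : IsM u) {δ ε : ℝ} (hδ : 0 ≤ δ) (hε : 0 ≤ ε) (p q : ℝ) :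
    IsM (uppf u δ ε p q) := by
  refine isM_gate1 (isM_max (isM_clipAdd (isM_translate_add hu δ) hε) (isM_const ?_ ?_)) q
  · exact le_min (by linarith [hu.nonneg (p + δ)]) zero_le_one
  · exact min_le_right _ _

/-- the lower comparison is eventually below the sequence, globally. -/
lemma eventually_low_le {u : ℝ → ℝ} {uk : ℕ → ℝ → ℝ} (hu : IsM u) (huk : ∀ k, IsM (uk k))
    {D : Set ℝ} (hD : ∀ᵐ x : ℝ ∂volume, x ∈ D)
    (hconv : ∀ x ∈ D, Tendsto (fun k => uk k x) atTop (𝓝 (u x)))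
    {δ ε p q : ℝ} (hδ : 0 < δ) (hε : 0 < ε) (hpq : p < q) :
    ∀ᶠ k in atTop, ∀ x, lowf u δ ε p q x ≤ uk k x := by
  set h := δ/2 with hh
  have hh0 : 0 < h := by positivity
  set N := Nat.ceil ((q - p)/h) with hN
  have hpick : ∀ i : ℕ, ∃ y, y ∈ D ∧ p + i*h - h < y ∧ y < p + i*h :=
    fun i => dense_of_ae hD (by linarith)
  choose d hdD hdl hdr using hpick
  have hev : ∀ᶠ k in atTop, ∀ i ∈ Finset.range (N+1), u (d i) - ε < uk k (d i) := by
    rw [eventually_all_finset]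
    intro i _
    exact (hconv (d i) (hdD i)).eventually (eventually_gt_nhds (by linarith))
  filter_upwards [hev] with k hk x
  rcases le_or_gt x p with hxp | hxp
  · have : lowf u δ ε p q x = 0 := if_neg (not_lt.2 hxp)
    rw [this]; exact (huk k).nonneg x
  · set x' := min x q with hx'
    have hx'p : p < x' := lt_min hxp hpq
    have hx'q : x' ≤ q := min_le_right _ _
    have hx'x : x' ≤ x := min_le_left _ _
    set i := Nat.floor ((x' - p)/h) with hi
    have hnn : 0 ≤ (x' - p)/h := div_nonneg (by linarith) hh0.le
    have hfl : (i:ℝ) ≤ (x' - p)/h := Nat.floor_le hnn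
    have hfl2 : (x' - p)/h < (i:ℝ) + 1 := Nat.lt_floor_add_one _
    have hih : (i:ℝ)*h ≤ x' - p := by
      have := (le_div_iff₀ hh0).1 hfl; linarith
    have hih2 : x' - p < (i:ℝ)*h + h := by
      have := (div_lt_iff₀ hh0).1 hfl2; linarith
    have hiN : i ∈ Finset.range (N+1) := by
      rw [Finset.mem_range, Nat.lt_succ_iff]
      have h1 : ((i:ℝ)) ≤ (q - p)/h := (le_div_iff₀ hh0).2 (by linarith)
      have h2 : ((q:ℝ) - p)/h ≤ (N:ℝ) := Nat.le_ceil _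
      exact_mod_cast Nat.cast_le.1 (le_trans h1 h2)
    have hd1 : d i < x' := lt_of_lt_of_le (hdr i) (by linarith)
    have hd2 : x' - δ < d i := by
      refine lt_of_le_of_lt ?_ (hdl i)
      have hhd : δ = 2*h := by rw [hh]; ring
      linarith
    have hukx : u (x' - δ) - ε ≤ uk k x := by
      have s1 : u (x' - δ) ≤ u (d i) := hu.1 hd2.le
      have s2 : u (d i) - ε < uk k (d i) := hk i hiN
      have s3 : uk k (d i) ≤ uk k x := (huk k).1 (le_trans hd1.le hx'x)
      linarith
    have hlow : lowf u δ ε p q x ≤ max (u (x' - δ) - ε) 0 := by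
      rw [lowf, gate_eq_of_lt hxp]
      rcases le_total x q with hxq | hqx
      · have : x' = x := min_eq_left hxq
        rw [this]; exact min_le_left _ _
      · have : x' = q := min_eq_right hqx
        rw [this]; exact min_le_right _ _
    refine le_trans hlow (max_le hukx ((huk k).nonneg x))

/-- the sequence is eventually below the upper comparison, globally. -/
lemma eventually_le_upp {u : ℝ → ℝ} {uk : ℕ → ℝ → ℝ} (hu : IsM u) (huk : ∀ k, IsM (uk k))
    {D : Set ℝ} (hD : ∀ᵐ x : ℝ ∂volume, x ∈ D)
    (hconv : ∀ x ∈ D, Tendsto (fun k => uk k x) atTop (𝓝 (u x)))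
    {δ ε p q : ℝ} (hδ : 0 < δ) (hε : 0 < ε) (hpq : p < q) :
    ∀ᶠ k in atTop, ∀ x, uk k x ≤ uppf u δ ε p q x := by
  set h := δ/2 with hh
  have hh0 : 0 < h := by positivity
  set N := Nat.ceil ((q - p)/h) with hN
  have hpick : ∀ i : ℕ, ∃ y, y ∈ D ∧ p + i*h - h < y ∧ y < p + i*h :=
    fun i => dense_of_ae hD (by linarith)
  choose d hdD hdl hdr using hpick
  have hev : ∀ᶠ k in atTop, ∀ i ∈ Finset.range (N+3), uk k (d i) < u (d i) + ε := by
    rw [eventually_all_finset]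
    intro i _
    exact (hconv (d i) (hdD i)).eventually (eventually_lt_nhds (by linarith))
  filter_upwards [hev] with k hk x
  rcases lt_or_ge q x with hqx | hxq
  · have : uppf u δ ε p q x = 1 := if_pos hqx
    rw [this]; exact (huk k).le_one x
  · set x'' := max x p with hx''
    have hx''p : p ≤ x'' := le_max_right _ _
    have hx''q : x'' ≤ q := max_le hxq hpq.le
    have hxx'' : x ≤ x'' := le_max_left _ _
    set i := Nat.floor ((x'' - p)/h) + 2 with hi
    have hnn : 0 ≤ (x'' - p)/h := div_nonneg (by linarith) hh0.le
    have hfl : ((Nat.floor ((x'' - p)/h)):ℝ) ≤ (x'' - p)/h := Nat.floor_le hnn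
    have hfl2 : (x'' - p)/h < ((Nat.floor ((x'' - p)/h)):ℝ) + 1 := Nat.lt_floor_add_one _
    have hcast : (i:ℝ) = ((Nat.floor ((x'' - p)/h)):ℝ) + 2 := by
      rw [hi]; push_cast; ring
    have hih : x'' - p < ((i:ℝ) - 1)*h := by
      rw [hcast]
      have := (div_lt_iff₀ hh0).1 hfl2
      nlinarith
    have hih2 : ((i:ℝ))*h ≤ x'' - p + 2*h := by
      rw [hcast]
      have := (le_div_iff₀ hh0).1 hfl
      nlinarith
    have hiN : i ∈ Finset.range (N+3) := by
      rw [Finset.mem_range]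
      have h1 : ((x'' - p)/h) ≤ ((q - p)/h) := by
        rw [div_le_div_iff_of_pos_right hh0]; linarith
      have h2 : ((Nat.floor ((x'' - p)/h)):ℝ) ≤ (N:ℝ) := le_trans hfl (le_trans h1 (Nat.le_ceil _))
      have h3 : Nat.floor ((x'' - p)/h) ≤ N := Nat.cast_le.1 h2
      omega
    have hd1 : x'' < d i := by
      refine lt_of_le_of_lt ?_ (hdl i)
      have : p + (i:ℝ)*h - h = p + ((i:ℝ)-1)*h := by ring
      rw [this]; linarith
    have hd2 : d i < x'' + δ := by
      refine lt_of_lt_of_le (hdr i) ?_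
      have hhd : δ = 2*h := by rw [hh]; ring
      linarith
    have hukx : uk k x ≤ u (x'' + δ) + ε := by
      have s1 : uk k x ≤ uk k (d i) := (huk k).1 (le_trans hxx'' hd1.le)
      have s2 : uk k (d i) < u (d i) + ε := hk i hiN
      have s3 : u (d i) ≤ u (x'' + δ) := hu.1 hd2.le
      linarith
    have hupp : min (u (x'' + δ) + ε) 1 ≤ uppf u δ ε p q x := by
      rw [uppf, gate1]
      rw [if_neg (not_lt.2 hxq)]
      rcases le_total x p with hxp | hpx
      · have : x'' = p := max_eq_right hxp
        rw [this]; exact le_max_right _ _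
      · have : x'' = x := max_eq_left hpx
        rw [this]; exact le_max_left _ _
    exact le_trans (le_min hukx ((huk k).le_one x)) hupp

/-- **a.e. continuity of `Q`**: pointwise a.e. convergence in `ℳ` is upgraded to
a.e. convergence of the images. -/
lemma lemC {Q : (ℝ → ℝ) → (ℝ → ℝ)} (hQ : Hyp1 Q) {uk : ℕ → ℝ → ℝ} {u : ℝ → ℝ}
    (huk : ∀ k, IsM (uk k)) (hu : IsM u)
    (hae : ∀ᵐ x : ℝ ∂volume, Tendsto (fun k => uk k x) atTop (𝓝 (u x))) :
    ∀ᵐ x : ℝ ∂volume, Tendsto (fun k => Q (uk k) x) atTop (𝓝 (Q u x)) := by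
  classical
  set D := {x : ℝ | Tendsto (fun k => uk k x) atTop (𝓝 (u x))} with hDdef
  have hDae : ∀ᵐ x : ℝ ∂volume, x ∈ D := hae
  have hconv : ∀ x ∈ D, Tendsto (fun k => uk k x) atTop (𝓝 (u x)) := fun x hx => hx
  set L := fun x => liminf (fun k => Q (uk k) x) atTop with hL
  set U := fun x => limsup (fun k => Q (uk k) x) atTop with hU
  have hQk : ∀ k, IsM (Q (uk k)) := fun k => hQ.maps _ (huk k)
  have hQu : IsM (Q u) := hQ.maps u hu
  -- ### lower bound
  have lower1 : ∀ δ ε : ℝ, 0 < δ → 0 < ε →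
      ∀ᵐ x : ℝ ∂volume, Q (fun y => max (u (y - δ) - ε) 0) x ≤ L x := by
    intro δ ε hδ hε
    set low2 := fun y => max (u (y - δ) - ε) 0 with hlow2
    have hlow2M : IsM low2 := isM_clipSub (isM_translate hu δ) hε.le
    have hpq : ∀ j : ℕ, (-(j:ℝ)-1) < ((j:ℝ)+1) := by
      intro j; have : (0:ℝ) ≤ (j:ℝ) := Nat.cast_nonneg j; linarith
    have hcut : ∀ j : ℕ, ∀ x, Q (lowf u δ ε (-(j:ℝ)-1) ((j:ℝ)+1)) x ≤ L x := by
      intro j x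
      have hev := eventually_low_le hu huk hDae hconv hδ hε (hpq j)
      have hev2 : ∀ᶠ k in atTop, Q (lowf u δ ε (-(j:ℝ)-1) ((j:ℝ)+1)) x ≤ Q (uk k) x :=
        hev.mono (fun k hk => hQ.mono _ _ (isM_lowf hu hδ.le hε.le _ _) (huk k) hk x)
      have hbd : IsBoundedUnder (· ≤ ·) atTop (fun k => Q (uk k) x) :=
        isBoundedUnder_of ⟨1, fun k => (hQk k).le_one x⟩
      exact le_liminf_of_le hbd.isCoboundedUnder_ge hev2
    have htuo : ∀ a b : ℝ, TendstoUniformlyOn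
        (fun j : ℕ => lowf u δ ε (-(j:ℝ)-1) ((j:ℝ)+1)) low2 atTop (Set.Icc a b) := by
      intro a b
      rw [Metric.tendstoUniformlyOn_iff]
      intro ε' hε'
      obtain ⟨J, hJ⟩ := exists_nat_gt (max (-a) b)
      have hJa : -a < (J:ℝ) := lt_of_le_of_lt (le_max_left _ _) hJ
      have hJb : b < (J:ℝ) := lt_of_le_of_lt (le_max_right _ _) hJ
      rw [eventually_atTop]
      refine ⟨J, fun j hj x hx => ?_⟩
      have hJj : (J:ℝ) ≤ (j:ℝ) := Nat.cast_le.2 hj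
      have h1 : -(j:ℝ)-1 < x := by
        have := hx.1; linarith
      have h2 : x ≤ (j:ℝ)+1 := by
        have := hx.2; linarith
      have heq : lowf u δ ε (-(j:ℝ)-1) ((j:ℝ)+1) x = low2 x := by
        rw [lowf, gate_eq_of_lt h1]
        exact min_eq_left (max_le_max (sub_le_sub_right (hu.1 (by linarith)) ε) le_rfl)
      simp [heq, hε']
    have hcont := hQ.cont _ low2 (fun j => isM_lowf hu hδ.le hε.le _ _) hlow2M htuo
    filter_upwards [hcont] with x hx
    exact le_of_tendsto hx (Eventually.of_forall (fun j => hcut j x))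
  have lower2 : ∀ δ : ℝ, 0 < δ → ∀ᵐ x : ℝ ∂volume, Q u (x - δ) ≤ L x := by
    intro δ hδ
    have hall : ∀ᵐ x : ℝ ∂volume, ∀ i : ℕ,
        Q (fun y => max (u (y - δ) - 1/((i:ℝ)+1)) 0) x ≤ L x :=
      ae_all_iff.2 (fun i => lower1 δ _ hδ (by positivity))
    have htuo : ∀ a b : ℝ, TendstoUniformlyOn
        (fun i : ℕ => fun y => max (u (y - δ) - 1/((i:ℝ)+1)) 0) (fun y => u (y - δ))
        atTop (Set.Icc a b) := by
      intro a b
      rw [Metric.tendstoUniformlyOn_iff]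
      intro ε' hε'
      have hev := tendsto_one_div_add_atTop_nhds_zero_nat.eventually
        (eventually_lt_nhds hε')
      filter_upwards [hev] with i hi x _
      have h0 : 0 ≤ u (x - δ) := hu.nonneg _
      have hpos : (0:ℝ) < 1/((i:ℝ)+1) := by positivity
      have hle : max (u (x-δ) - 1/((i:ℝ)+1)) 0 ≤ u (x-δ) := max_le (by linarith) h0
      have hge : u (x-δ) - 1/((i:ℝ)+1) ≤ max (u (x-δ) - 1/((i:ℝ)+1)) 0 := le_max_left _ _
      rw [Real.dist_eq]
      have habs : |u (x - δ) - max (u (x-δ) - 1/((i:ℝ)+1)) 0| ≤ 1/((i:ℝ)+1) :=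
        abs_le.2 ⟨by linarith, by linarith⟩
      exact lt_of_le_of_lt habs hi
    have hcont := hQ.cont _ _ (fun i => isM_clipSub (isM_translate hu δ) (by positivity))
      (isM_translate hu δ) htuo
    have htr : ∀ x, Q (fun y => u (y - δ)) x = Q u (x - δ) :=
      fun x => congrFun (hQ.transl δ u hu) x
    filter_upwards [hcont, hall] with x hx hx2
    have := le_of_tendsto hx (Eventually.of_forall (fun i => hx2 i))
    rwa [htr x] at this
  have lower : ∀ᵐ x : ℝ ∂volume, Q u x ≤ L x := by
    have hall : ∀ᵐ x : ℝ ∂volume, ∀ m : ℕ, Q u (x - 1/((m:ℝ)+1)) ≤ L x :=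
      ae_all_iff.2 (fun m => lower2 _ (by positivity))
    filter_upwards [hall] with x hx
    exact le_of_tendsto (tendsto_left_seq hQu x) (Eventually.of_forall hx)
  -- ### upper bound
  have upper1 : ∀ δ ε : ℝ, 0 < δ → 0 < ε →
      ∀ᵐ x : ℝ ∂volume, U x ≤ Q (fun y => min (u (y + δ) + ε) 1) x := by
    intro δ ε hδ hε
    set upp2 := fun y => min (u (y + δ) + ε) 1 with hupp2
    have hupp2M : IsM upp2 := isM_clipAdd (isM_translate_add hu δ) hε.le
    have hpq : ∀ j : ℕ, (-(j:ℝ)-1) < ((j:ℝ)+1) := by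
      intro j; have : (0:ℝ) ≤ (j:ℝ) := Nat.cast_nonneg j; linarith
    have hcut : ∀ j : ℕ, ∀ x, U x ≤ Q (uppf u δ ε (-(j:ℝ)-1) ((j:ℝ)+1)) x := by
      intro j x
      have hev := eventually_le_upp hu huk hDae hconv hδ hε (hpq j)
      have hev2 : ∀ᶠ k in atTop, Q (uk k) x ≤ Q (uppf u δ ε (-(j:ℝ)-1) ((j:ℝ)+1)) x :=
        hev.mono (fun k hk => hQ.mono _ _ (huk k) (isM_uppf hu hδ.le hε.le _ _) hk x)
      have hbd : IsBoundedUnder (· ≥ ·) atTop (fun k => Q (uk k) x) :=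
        isBoundedUnder_of ⟨0, fun k => (hQk k).nonneg x⟩
      exact limsup_le_of_le hbd.isCoboundedUnder_le hev2
    have htuo : ∀ a b : ℝ, TendstoUniformlyOn
        (fun j : ℕ => uppf u δ ε (-(j:ℝ)-1) ((j:ℝ)+1)) upp2 atTop (Set.Icc a b) := by
      intro a b
      rw [Metric.tendstoUniformlyOn_iff]
      intro ε' hε'
      obtain ⟨J, hJ⟩ := exists_nat_gt (max (-a) b)
      have hJa : -a < (J:ℝ) := lt_of_le_of_lt (le_max_left _ _) hJ
      have hJb : b < (J:ℝ) := lt_of_le_of_lt (le_max_right _ _) hJ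
      rw [eventually_atTop]
      refine ⟨J, fun j hj x hx => ?_⟩
      have hJj : (J:ℝ) ≤ (j:ℝ) := Nat.cast_le.2 hj
      have h2 : ¬ ((j:ℝ)+1 < x) := by
        push_neg; have := hx.2; linarith
      have heq : uppf u δ ε (-(j:ℝ)-1) ((j:ℝ)+1) x = upp2 x := by
        rw [uppf, gate1, if_neg h2]
        refine max_eq_left (min_le_min ?_ le_rfl)
        have : -(j:ℝ)-1+δ ≤ x+δ := by have := hx.1; linarith
        linarith [hu.1 this]
      simp [heq, hε']
    have hcont := hQ.cont _ upp2 (fun j => isM_uppf hu hδ.le hε.le _ _) hupp2M htuo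
    filter_upwards [hcont] with x hx
    exact ge_of_tendsto hx (Eventually.of_forall (fun j => hcut j x))
  have upper2 : ∀ δ : ℝ, 0 < δ → ∀ᵐ x : ℝ ∂volume, U x ≤ Q u (x + δ) := by
    intro δ hδ
    have hall : ∀ᵐ x : ℝ ∂volume, ∀ i : ℕ,
        U x ≤ Q (fun y => min (u (y + δ) + 1/((i:ℝ)+1)) 1) x :=
      ae_all_iff.2 (fun i => upper1 δ _ hδ (by positivity))
    have htuo : ∀ a b : ℝ, TendstoUniformlyOn
        (fun i : ℕ => fun y => min (u (y + δ) + 1/((i:ℝ)+1)) 1) (fun y => u (y + δ))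
        atTop (Set.Icc a b) := by
      intro a b
      rw [Metric.tendstoUniformlyOn_iff]
      intro ε' hε'
      have hev := tendsto_one_div_add_atTop_nhds_zero_nat.eventually
        (eventually_lt_nhds hε')
      filter_upwards [hev] with i hi x _
      have h1 : u (x + δ) ≤ 1 := hu.le_one _
      have hpos : (0:ℝ) < 1/((i:ℝ)+1) := by positivity
      have hge : u (x + δ) ≤ min (u (x+δ) + 1/((i:ℝ)+1)) 1 := le_min (by linarith) h1
      have hle : min (u (x+δ) + 1/((i:ℝ)+1)) 1 ≤ u (x+δ) + 1/((i:ℝ)+1) := min_le_left _ _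
      rw [Real.dist_eq]
      have habs : |u (x + δ) - min (u (x+δ) + 1/((i:ℝ)+1)) 1| ≤ 1/((i:ℝ)+1) :=
        abs_le.2 ⟨by linarith, by linarith⟩
      exact lt_of_le_of_lt habs hi
    have hcont := hQ.cont _ _ (fun i => isM_clipAdd (isM_translate_add hu δ) (by positivity))
      (isM_translate_add hu δ) htuo
    have htr : ∀ x, Q (fun y => u (y + δ)) x = Q u (x + δ) := by
      intro x
      have hfe : (fun y => u (y + δ)) = (fun y => u (y - (-δ))) := by
        funext y; rw [sub_neg_eq_add]
      rw [hfe]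
      have := congrFun (hQ.transl (-δ) u hu) x
      rw [this, sub_neg_eq_add]
    filter_upwards [hcont, hall] with x hx hx2
    have := ge_of_tendsto hx (Eventually.of_forall (fun i => hx2 i))
    rwa [htr x] at this
  have hcd : ∀ᵐ x : ℝ ∂volume, ContinuousAt (Q u) x := by
    have hcount := (hQu.1).countable_not_continuousAt
    have hzero := hcount.measure_zero volume
    rw [ae_iff]
    convert hzero using 2
  have upper : ∀ᵐ x : ℝ ∂volume, U x ≤ Q u x := by
    have hall : ∀ᵐ x : ℝ ∂volume, ∀ m : ℕ, U x ≤ Q u (x + 1/((m:ℝ)+1)) :=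
      ae_all_iff.2 (fun m => upper2 _ (by positivity))
    filter_upwards [hall, hcd] with x hx hcx
    exact ge_of_tendsto (tendsto_right_seq hcx) (Eventually.of_forall hx)
  filter_upwards [lower, upper] with x h1 h2
  exact tendsto_of_le_liminf_of_limsup_le h1 h2
    (isBoundedUnder_of ⟨1, fun k => (hQk k).le_one x⟩)
    (isBoundedUnder_of ⟨0, fun k => (hQk k).nonneg x⟩)

/-! ### Helly selection -/

lemma helly {A : ℕ → ℝ → ℝ} (hA : ∀ k, IsM (A k)) :
    ∃ (Ψ : ℝ → ℝ) (σ : ℕ → ℕ), IsM Ψ ∧ StrictMono σ ∧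
      ∀ᵐ x : ℝ ∂volume, Tendsto (fun j => A (σ j) x) atTop (𝓝 (Ψ x)) := by
  classical
  set F : ℕ → (ℚ → Set.Icc (0:ℝ) 1) := fun k q => ⟨A k q, (hA k).2.2 q⟩ with hF
  obtain ⟨G, -, σ, hσ, htend⟩ := (isCompact_univ :
    IsCompact (Set.univ : Set (ℚ → Set.Icc (0:ℝ) 1))).tendsto_subseq
    (x := F) (fun n => Set.mem_univ _)
  set g : ℚ → ℝ := fun q => (G q : ℝ) with hg
  have hgconv : ∀ q : ℚ, Tendsto (fun j => A (σ j) q) atTop (𝓝 (g q)) := by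
    intro q
    have h1 : Tendsto (fun j => F (σ j) q) atTop (𝓝 (G q)) :=
      (tendsto_pi_nhds.1 htend) q
    exact (continuous_subtype_val.tendsto _).comp h1
  have hg0 : ∀ q, 0 ≤ g q := fun q => (G q).2.1
  have hg1 : ∀ q, g q ≤ 1 := fun q => (G q).2.2
  have hgmono : ∀ q q' : ℚ, q ≤ q' → g q ≤ g q' := by
    intro q q' hqq
    exact le_of_tendsto_of_tendsto (hgconv q) (hgconv q')
      (Eventually.of_forall fun j => (hA (σ j)).1 (by exact_mod_cast hqq))
  set Ψ : ℝ → ℝ := fun x => sSup (g '' {q : ℚ | (q:ℝ) < x}) with hΨ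
  have hne : ∀ x : ℝ, (g '' {q : ℚ | (q:ℝ) < x}).Nonempty := by
    intro x
    obtain ⟨q, hq⟩ := exists_rat_lt x
    exact ⟨g q, ⟨q, hq, rfl⟩⟩
  have hbd : ∀ x : ℝ, BddAbove (g '' {q : ℚ | (q:ℝ) < x}) := by
    intro x
    refine ⟨1, ?_⟩
    rintro r ⟨q, -, rfl⟩
    exact hg1 q
  have hgΨ1 : ∀ (x : ℝ) (q : ℚ), (q:ℝ) < x → g q ≤ Ψ x :=
    fun x q hq => le_csSup (hbd x) ⟨q, hq, rfl⟩
  have hgΨ2 : ∀ (x : ℝ) (q' : ℚ), x ≤ (q':ℝ) → Ψ x ≤ g q' := by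
    intro x q' hq'
    refine csSup_le (hne x) ?_
    rintro r ⟨q, hq, rfl⟩
    refine hgmono q q' ?_
    exact_mod_cast le_of_lt (lt_of_lt_of_le hq hq')
  have hΨmono : Monotone Ψ := by
    intro a b hab
    refine csSup_le (hne a) ?_
    rintro r ⟨q, hq, rfl⟩
    exact hgΨ1 b q (lt_of_lt_of_le hq hab)
  have hΨM : IsM Ψ := by
    refine ⟨hΨmono, fun x => ?_, fun x => ?_⟩
    · rw [ContinuousWithinAt, tendsto_order]
      constructor
      · intro a ha
        obtain ⟨r, ⟨q, hq, rfl⟩, har⟩ := exists_lt_of_lt_csSup (hne x) ha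
        have hmem : Set.Ioi ((q:ℝ)) ∈ 𝓝[Set.Iic x] x := nhdsWithin_le_nhds (Ioi_mem_nhds hq)
        filter_upwards [hmem] with y hy
        exact lt_of_lt_of_le har (hgΨ1 y q hy)
      · intro b hb
        filter_upwards [eventually_mem_nhdsWithin] with y (hy : y ≤ x)
        exact lt_of_le_of_lt (hΨmono hy) hb
    · constructor
      · obtain ⟨q, hq⟩ := exists_rat_lt x
        exact le_trans (hg0 q) (hgΨ1 x q hq)
      · exact csSup_le (hne x) (by rintro r ⟨q, -, rfl⟩; exact hg1 q)
  have hconv : ∀ x : ℝ, ContinuousAt Ψ x →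
      Tendsto (fun j => A (σ j) x) atTop (𝓝 (Ψ x)) := by
    intro x hcx
    have hbdd1 : IsBoundedUnder (· ≤ ·) atTop (fun j => A (σ j) x) :=
      isBoundedUnder_of ⟨1, fun j => (hA (σ j)).le_one x⟩
    have hbdd0 : IsBoundedUnder (· ≥ ·) atTop (fun j => A (σ j) x) :=
      isBoundedUnder_of ⟨0, fun j => (hA (σ j)).nonneg x⟩
    have hliminf : Ψ x ≤ liminf (fun j => A (σ j) x) atTop := by
      refine csSup_le (hne x) ?_
      rintro r ⟨q, hq, rfl⟩
      have h1 : liminf (fun j => A (σ j) (q:ℝ)) atTop = g q := (hgconv q).liminf_eq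
      rw [← h1]
      refine liminf_le_liminf (Eventually.of_forall fun j => (hA (σ j)).1 hq.le) ?_ ?_
      · exact isBoundedUnder_of ⟨0, fun j => (hA (σ j)).nonneg _⟩
      · exact hbdd1.isCoboundedUnder_ge
    have hlimsup : limsup (fun j => A (σ j) x) atTop ≤ Ψ x := by
      by_contra hcon
      push_neg at hcon
      set η := (limsup (fun j => A (σ j) x) atTop - Ψ x)/2 with hη
      have hη0 : 0 < η := by rw [hη]; linarith
      have hev : ∀ᶠ y in 𝓝 x, Ψ y < Ψ x + η :=
        hcx.eventually (eventually_lt_nhds (by linarith))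
      haveI hne2 : (𝓝[Set.Ioi x] x).NeBot := nhdsGT_neBot x
      have hev' : ∀ᶠ y in 𝓝[Set.Ioi x] x, Ψ y < Ψ x + η :=
        hev.filter_mono (nhdsWithin_le_nhds : 𝓝[Set.Ioi x] x ≤ 𝓝 x)
      obtain ⟨y, hy1, hy2⟩ := (hev'.and eventually_mem_nhdsWithin).exists
      obtain ⟨q', hq1, hq2⟩ := exists_rat_btwn (show x < y from hy2)
      have h3 : limsup (fun j => A (σ j) x) atTop ≤ g q' := by
        have h4 : limsup (fun j => A (σ j) (q':ℝ)) atTop = g q' := (hgconv q').limsup_eq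
        rw [← h4]
        refine limsup_le_limsup (Eventually.of_forall fun j => (hA (σ j)).1 hq1.le) ?_ ?_
        · exact hbdd0.isCoboundedUnder_le
        · exact isBoundedUnder_of ⟨1, fun j => (hA (σ j)).le_one _⟩
      have h5 : g q' ≤ Ψ y := hgΨ1 y q' hq2
      have hyy : Ψ y < Ψ x + η := hy1
      rw [hη] at hyy
      linarith [h3, h5]
    exact tendsto_of_le_liminf_of_limsup_le hliminf hlimsup hbdd1 hbdd0
  refine ⟨Ψ, σ, hΨM, hσ, ?_⟩
  have hcount := (hΨmono).countable_not_continuousAt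
  have hzero := hcount.measure_zero volume
  have hae : ∀ᵐ x : ℝ ∂volume, ContinuousAt Ψ x := by
    rw [ae_iff]; convert hzero using 2
  filter_upwards [hae] with x hx
  exact hconv x hx

/-! ### the pinned iteration and its limit profile -/

section Pinned

variable {Q : (ℝ → ℝ) → (ℝ → ℝ)}

lemma q_shift_add (hQ : Hyp1 Q) {u : ℝ → ℝ} (hu : IsM u) (t x : ℝ) :
    Q (fun w => u (w + t)) x = Q u (x + t) := by
  have hfe : (fun w => u (w + t)) = (fun w => u (w - (-t))) := by
    funext w; rw [sub_neg_eq_add]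
  rw [hfe]
  have := congrFun (hQ.transl (-t) u hu) x
  rw [this, sub_neg_eq_add]

lemma stepf_shift (α y t x : ℝ) : stepf α y (x + t) = stepf α (y - t) x := by
  show (if y < x + t then α else 0) = (if y - t < x then α else 0)
  have : (y < x + t) ↔ (y - t < x) := by constructor <;> intro <;> linarith
  exact if_congr this rfl rfl

/-- the pinned iteration `w₀ = φ`, `w_{n+1} = max (φ, R w_n)`. -/
noncomputable def pinned (Q : (ℝ → ℝ) → (ℝ → ℝ)) (c : ℝ) (φ : ℝ → ℝ) : ℕ → ℝ → ℝ
  | 0 => φ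
  | (n+1) => fun x => max (φ x) (Rop Q c (pinned Q c φ n) x)

lemma isM_pinned (hQ : Hyp1 Q) (c : ℝ) {φ : ℝ → ℝ} (hφ : IsM φ) :
    ∀ n, IsM (pinned Q c φ n) := by
  intro n
  induction n with
  | zero => exact hφ
  | succ n ih => exact isM_max hφ (isM_Rop hQ c ih)

lemma pinned_mono (hQ : Hyp1 Q) (c : ℝ) {φ : ℝ → ℝ} (hφ : IsM φ) :
    ∀ n x, pinned Q c φ n x ≤ pinned Q c φ (n+1) x := by
  intro n
  induction n with
  | zero => intro x; exact le_max_left _ _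
  | succ n ih =>
    intro x
    show max (φ x) (Rop Q c (pinned Q c φ n) x) ≤ max (φ x) (Rop Q c (pinned Q c φ (n+1)) x)
    exact max_le_max le_rfl
      (Rop_mono hQ c (isM_pinned hQ c hφ n) (isM_pinned hQ c hφ (n+1)) ih x)

lemma pinned_mono_n (hQ : Hyp1 Q) (c : ℝ) {φ : ℝ → ℝ} (hφ : IsM φ) (x : ℝ) :
    Monotone (fun n => pinned Q c φ n x) :=
  monotone_nat_of_le_succ (fun n => pinned_mono hQ c hφ n x)

/-- the limit of the pinned iteration. -/
noncomputable def pinLim (Q : (ℝ → ℝ) → (ℝ → ℝ)) (c : ℝ) (φ : ℝ → ℝ) : ℝ → ℝ :=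
  fun x => ⨆ n, pinned Q c φ n x

lemma isM_pinLim (hQ : Hyp1 Q) (c : ℝ) {φ : ℝ → ℝ} (hφ : IsM φ) : IsM (pinLim Q c φ) :=
  isM_iSup (isM_pinned hQ c hφ)

lemma pinned_le_pinLim (hQ : Hyp1 Q) (c : ℝ) {φ : ℝ → ℝ} (hφ : IsM φ) (n : ℕ) (x : ℝ) :
    pinned Q c φ n x ≤ pinLim Q c φ x :=
  le_ciSup (f := fun n => pinned Q c φ n x)
    ⟨1, by rintro r ⟨m, rfl⟩; exact (isM_pinned hQ c hφ m).le_one x⟩ n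

lemma pinLim_tendsto (hQ : Hyp1 Q) (c : ℝ) {φ : ℝ → ℝ} (hφ : IsM φ) (x : ℝ) :
    Tendsto (fun n => pinned Q c φ n x) atTop (𝓝 (pinLim Q c φ x)) :=
  tendsto_atTop_ciSup (pinned_mono_n hQ c hφ x)
    (⟨1, by rintro r ⟨m, rfl⟩; exact (isM_pinned hQ c hφ m).le_one x⟩ :
      BddAbove (Set.range fun n => pinned Q c φ n x))

/-- the limit profile satisfies the pinned equation. -/
lemma pinLim_eq (hQ : Hyp1 Q) (c : ℝ) {φ : ℝ → ℝ} (hφ : IsM φ) :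
    ∀ x, pinLim Q c φ x = max (φ x) (Rop Q c (pinLim Q c φ) x) := by
  have hae := lemC hQ (fun n => isM_pinned hQ c hφ n) (isM_pinLim hQ c hφ)
    (Eventually.of_forall (pinLim_tendsto hQ c hφ))
  have hae2 : ∀ᵐ x : ℝ ∂volume,
      Tendsto (fun n => Q (pinned Q c φ n) (x - c)) atTop (𝓝 (Q (pinLim Q c φ) (x - c))) :=
    ae_shift c hae
  have haeq : ∀ᵐ x : ℝ ∂volume,
      pinLim Q c φ x = max (φ x) (Rop Q c (pinLim Q c φ) x) := by
    filter_upwards [hae2] with x hx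
    have h1 : Tendsto (fun n => pinned Q c φ (n+1) x) atTop (𝓝 (pinLim Q c φ x)) :=
      (pinLim_tendsto hQ c hφ x).comp (tendsto_add_atTop_nat 1)
    have h2 : Tendsto (fun n => max (φ x) (Q (pinned Q c φ n) (x - c))) atTop
        (𝓝 (max (φ x) (Q (pinLim Q c φ) (x - c)))) := tendsto_const_nhds.max hx
    have h3 : (fun n => pinned Q c φ (n+1) x)
        = fun n => max (φ x) (Q (pinned Q c φ n) (x - c)) := rfl
    rw [h3] at h1
    exact tendsto_nhds_unique h1 h2
  exact eq_of_ae_eq (isM_pinLim hQ c hφ)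
    (isM_max hφ (isM_Rop hQ c (isM_pinLim hQ c hφ))) haeq

lemma pinLim_ge_R (hQ : Hyp1 Q) (c : ℝ) {φ : ℝ → ℝ} (hφ : IsM φ) (x : ℝ) :
    Rop Q c (pinLim Q c φ) x ≤ pinLim Q c φ x := by
  rw [pinLim_eq hQ c hφ x]; exact le_max_right _ _

lemma pinLim_ge_phi (hQ : Hyp1 Q) (c : ℝ) {φ : ℝ → ℝ} (hφ : IsM φ) (x : ℝ) :
    φ x ≤ pinLim Q c φ x := by
  rw [pinLim_eq hQ c hφ x]; exact le_max_left _ _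

/-- the limit profile climbs the chain on the far right. -/
lemma pinLim_climb (hQ : Hyp1 Q) (c : ℝ) {b x₁ : ℝ} (hb : 0 < b) (hb1 : b < 1) :
    ∀ j, ∃ Y : ℝ, ∀ x, Y < x → chain Q b j ≤ pinLim Q c (stepf b x₁) x := by
  have hφ : IsM (stepf b x₁) := isM_stepf hb.le hb1.le x₁
  intro j
  induction j with
  | zero =>
    refine ⟨x₁, fun x hx => ?_⟩
    have h1 : stepf b x₁ x = b := stepf_of_lt hx
    have := pinLim_ge_phi hQ c hφ x
    rw [h1] at this
    exact this
  | succ j ih =>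
    obtain ⟨Y, hY⟩ := ih
    have hmem := chain_mem hQ hb hb1 j
    have hgl := gQ_lt hQ hmem.1 hmem.2
    set s := chain Q b j with hs
    set ε := (gQ Q s - s)/2 with hε
    have hε0 : 0 < ε := by rw [hε]; linarith
    obtain ⟨τ, hτ⟩ := rung hQ c hmem.1 hmem.2 hε0
    refine ⟨Y + τ, fun x hx => ?_⟩
    have hsle : ∀ w, stepf s Y w ≤ pinLim Q c (stepf b x₁) w := by
      intro w
      rcases lt_or_ge Y w with hw | hw
      · rw [stepf_of_lt hw]; exact hY w hw
      · have : stepf s Y w = 0 := if_neg (not_lt.2 hw)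
        rw [this]; exact (isM_pinLim hQ c hφ).nonneg w
    have h1 : gQ Q s - ε ≤ Rop Q c (stepf s Y) x := hτ Y x hx
    have h2 : Rop Q c (stepf s Y) x ≤ Rop Q c (pinLim Q c (stepf b x₁)) x :=
      Rop_mono hQ c (isM_stepf hmem.1.le hmem.2.le Y) (isM_pinLim hQ c hφ) hsle x
    have h3 : Rop Q c (pinLim Q c (stepf b x₁)) x ≤ pinLim Q c (stepf b x₁) x :=
      pinLim_ge_R hQ c hφ x
    have h4 : chain Q b (j+1) = gQ Q s - ε := by
      show (s + gQ Q s)/2 = gQ Q s - ε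
      rw [hε]; ring
    rw [h4]
    linarith

end Pinned

end YG

/-- Proposition 2. -/
theorem proposition2 (Q : (ℝ → ℝ) → (ℝ → ℝ)) (hQ : Hyp1 Q) (c : ℝ)
    (v : ℕ → ℝ → ℝ) (hv : ∀ n, IsM (v n))
    (hsuper : ∀ n x, Q (v n) (x - c) ≤ v (n + 1) x)
    (hinf : ¬ ∀ x : ℝ, (⨅ n : ℕ, v n x) = 0)
    (hliminf : ¬ ∀ x : ℝ, liminf (fun n => v n x) atTop = 1) :
    ∃ ψ : ℝ → ℝ, IsM ψ ∧ (∀ x : ℝ, Q ψ (x - c) = ψ x) ∧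
      Tendsto ψ atBot (𝓝 0) ∧ Tendsto ψ atTop (𝓝 1) := by
  classical
  open YG in
  push_neg at hinf hliminf
  obtain ⟨x₁, hx₁⟩ := hinf
  obtain ⟨x₂, hx₂⟩ := hliminf
  -- ## the floor level β at x₁
  have hbddv : ∀ x : ℝ, BddBelow (Set.range fun n => v n x) :=
    fun x => ⟨0, by rintro r ⟨n, rfl⟩; exact (hv n).nonneg x⟩
  have hinf0 : 0 ≤ ⨅ n, v n x₁ := le_ciInf (fun n => (hv n).nonneg x₁)
  set β := min (⨅ n, v n x₁) (1/2) with hβdef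
  have hβpos : 0 < β := by
    have h1 : 0 < ⨅ n, v n x₁ := lt_of_le_of_ne hinf0 (Ne.symm hx₁)
    exact lt_min h1 (by norm_num)
  have hβlt1 : β < 1 := lt_of_le_of_lt (min_le_right _ _) (by norm_num)
  have hβle : ∀ n, β ≤ v n x₁ := fun n => le_trans (min_le_left _ _) (ciInf_le (hbddv x₁) n)
  have hstep_le_v : ∀ n x, YG.stepf β x₁ x ≤ v n x := by
    intro n x
    show (if x₁ < x then β else 0) ≤ v n x
    split
    · exact le_trans (hβle n) ((hv n).1 (le_of_lt (by assumption)))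
    · exact (hv n).nonneg x
  -- ## the ceiling level L < 1 at x₂
  set L := liminf (fun n => v n x₂) atTop with hLdef
  have hL1 : L ≤ 1 :=
    liminf_le_of_frequently_le (Frequently.of_forall (fun n => (hv n).le_one x₂))
      (isBoundedUnder_of ⟨0, fun n => (hv n).nonneg x₂⟩)
  have hL0 : 0 ≤ L := by
    refine le_liminf_of_le ?_ (Eventually.of_forall (fun n => (hv n).nonneg x₂))
    exact (isBoundedUnder_of ⟨1, fun n => (hv n).le_one x₂⟩).isCoboundedUnder_ge
  have hLlt1 : L < 1 := lt_of_le_of_ne hL1 hx₂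
  set μ := (1 + L)/2 with hμdef
  have hμL : L < μ := by rw [hμdef]; linarith
  have hμ1 : μ < 1 := by rw [hμdef]; linarith
  have hμ0 : 0 < μ := by rw [hμdef]; linarith
  -- ## the pinned profiles at pin levels bs k = β/(k+1)
  set bs : ℕ → ℝ := fun k => β/((k:ℝ)+1) with hbsdef
  have hbs0 : ∀ k, 0 < bs k := fun k => by positivity
  have hbsβ : ∀ k, bs k ≤ β := fun k => by
    refine div_le_self hβpos.le ?_
    have : (0:ℝ) ≤ (k:ℝ) := Nat.cast_nonneg k
    linarith
  have hbs1 : ∀ k, bs k < 1 := fun k => lt_of_le_of_lt (hbsβ k) hβlt1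
  set a : ℕ → ℝ → ℝ := fun k => YG.pinLim Q c (YG.stepf (bs k) x₁) with hadef
  have hstepM : ∀ k, IsM (YG.stepf (bs k) x₁) := fun k => isM_stepf (hbs0 k).le (hbs1 k).le x₁
  have haM : ∀ k, IsM (a k) := fun k => isM_pinLim hQ c (hstepM k)
  -- pinned iterates are below the given supersolutions
  have hpinned_le_v : ∀ k n x, YG.pinned Q c (YG.stepf (bs k) x₁) n x ≤ v n x := by
    intro k n
    induction n with
    | zero =>
      intro x
      show (if x₁ < x then bs k else 0) ≤ v 0 x
      split
      · exact le_trans (le_trans (hbsβ k) (hβle 0)) ((hv 0).1 (le_of_lt (by assumption)))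
      · exact (hv 0).nonneg x
    | succ n ih =>
      intro x
      show max (YG.stepf (bs k) x₁ x) (YG.Rop Q c (YG.pinned Q c (YG.stepf (bs k) x₁) n) x)
        ≤ v (n+1) x
      refine max_le ?_ ?_
      · have hmono : YG.stepf (bs k) x₁ x ≤ YG.stepf β x₁ x := by
          show (if x₁ < x then bs k else 0) ≤ (if x₁ < x then β else 0)
          split
          · exact hbsβ k
          · exact le_rfl
        exact le_trans hmono (hstep_le_v (n+1) x)
      · refine le_trans ?_ (hsuper n x)
        exact hQ.mono _ _ (isM_pinned hQ c (hstepM k) n) (hv n) ih (x - c)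
  -- the limit profiles stay `≤ L` at x₂
  have haL : ∀ k, a k x₂ ≤ L := by
    intro k
    refine ciSup_le (fun n => ?_)
    refine le_liminf_of_le ?_ ?_
    · exact (isBoundedUnder_of ⟨1, fun m => (hv m).le_one x₂⟩).isCoboundedUnder_ge
    · rw [eventually_atTop]
      refine ⟨n, fun m hm => ?_⟩
      exact le_trans (pinned_mono_n hQ c (hstepM k) x₂ hm) (hpinned_le_v k m x₂)
  -- ## the fronts θ k
  have hfront : ∀ k, ∃ xs : ℝ, μ < a k xs := by
    intro k
    obtain ⟨j, hj⟩ := chain_reaches hQ (hbs0 k) (hbs1 k) hμ1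
    obtain ⟨Y, hY⟩ := pinLim_climb hQ c (hbs0 k) (hbs1 k) j
    exact ⟨Y + 1, lt_of_lt_of_le hj (hY (Y+1) (by linarith))⟩
  have hSne : ∀ k, a k x₂ ≤ μ := fun k => le_trans (haL k) hμL.le
  set θ : ℕ → ℝ := fun k => sSup {x | a k x ≤ μ} with hθdef
  have hθ1 : ∀ k x, x < θ k → a k x ≤ μ := by
    intro k x hx
    have hx' : x < sSup {y : ℝ | a k y ≤ μ} := hx
    obtain ⟨s, hs, hxs⟩ := exists_lt_of_lt_csSup
      (⟨x₂, (hSne k : x₂ ∈ {y : ℝ | a k y ≤ μ})⟩ : Set.Nonempty {y : ℝ | a k y ≤ μ}) hx'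
    exact le_trans ((haM k).1 hxs.le) (hs : a k s ≤ μ)
  have hθbdd : ∀ k, BddAbove {x | a k x ≤ μ} := by
    intro k
    obtain ⟨xs, hxs⟩ := hfront k
    refine ⟨xs, fun s hs => ?_⟩
    by_contra hcon
    push_neg at hcon
    exact absurd (le_trans ((haM k).1 hcon.le) hs) (not_le.2 hxs)
  have hθ2 : ∀ k x, θ k < x → μ < a k x := by
    intro k x hx
    by_contra hcon
    push_neg at hcon
    exact absurd (le_csSup (hθbdd k) (hcon : x ∈ {y : ℝ | a k y ≤ μ})) (not_le.2 hx)
  -- ## the normalized profiles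
  set A : ℕ → ℝ → ℝ := fun k => fun x => a k (x + θ k) with hAdef
  have hAM : ∀ k, IsM (A k) := fun k => isM_translate_add (haM k) (θ k)
  have hAeq : ∀ k x, A k x = max (YG.stepf (bs k) (x₁ - θ k) x) (YG.Rop Q c (A k) x) := by
    intro k x
    have h1 := pinLim_eq hQ c (hstepM k) (x + θ k)
    have h2 : YG.stepf (bs k) x₁ (x + θ k) = YG.stepf (bs k) (x₁ - θ k) x :=
      stepf_shift _ _ _ _
    have h3 : YG.Rop Q c (YG.pinLim Q c (YG.stepf (bs k) x₁)) (x + θ k)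
        = YG.Rop Q c (A k) x := by
      show Q (a k) (x + θ k - c) = Q (A k) (x - c)
      have h4 : Q (A k) (x - c) = Q (a k) ((x - c) + θ k) := q_shift_add hQ (haM k) (θ k) (x - c)
      rw [h4]
      congr 1
      ring
    show YG.pinLim Q c (YG.stepf (bs k) x₁) (x + θ k)
      = max (YG.stepf (bs k) (x₁ - θ k) x) (YG.Rop Q c (A k) x)
    rw [h1, h2, h3]
  have hAlow : ∀ k x, x < 0 → A k x ≤ μ := by
    intro k x hx
    exact hθ1 k (x + θ k) (by linarith)
  have hAhigh : ∀ k x, 0 < x → μ ≤ A k x := by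
    intro k x hx
    exact (hθ2 k (x + θ k) (by linarith)).le
  -- ## Helly selection and passage to the limit
  obtain ⟨Ψ, σ, hΨM, hσ, hae3⟩ := helly hAM
  have hae4 := lemC hQ (fun j => hAM (σ j)) hΨM hae3
  have hae5 : ∀ᵐ x : ℝ ∂volume,
      Tendsto (fun j => Q (A (σ j)) (x - c)) atTop (𝓝 (Q Ψ (x - c))) := ae_shift c hae4
  have haeq : ∀ᵐ x : ℝ ∂volume, Ψ x = YG.Rop Q c Ψ x := by
    filter_upwards [hae3, hae5] with x h1 h2
    -- the step terms tend to 0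
    have hb0 : Tendsto (fun j : ℕ => β/((j:ℝ)+1)) atTop (𝓝 0) := by
      have h := tendsto_one_div_add_atTop_nhds_zero_nat.const_mul β
      rw [mul_zero] at h
      exact h.congr (fun n => by ring)
    have hsle : ∀ j, YG.stepf (bs (σ j)) (x₁ - θ (σ j)) x ≤ β/((j:ℝ)+1) := by
      intro j
      refine le_trans (stepf_le (hbs0 (σ j)).le x) ?_
      show β/((σ j : ℝ)+1) ≤ β/((j:ℝ)+1)
      have hj : (j:ℝ) ≤ (σ j : ℝ) := Nat.cast_le.2 hσ.le_apply
      gcongr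
    have hstend : Tendsto (fun j => YG.stepf (bs (σ j)) (x₁ - θ (σ j)) x) atTop (𝓝 0) := by
      refine tendsto_of_tendsto_of_tendsto_of_le_of_le tendsto_const_nhds hb0 ?_ hsle
      exact fun j => stepf_nonneg (hbs0 (σ j)).le x
    have hmax : Tendsto (fun j => max (YG.stepf (bs (σ j)) (x₁ - θ (σ j)) x)
        (Q (A (σ j)) (x - c))) atTop (𝓝 (max 0 (Q Ψ (x - c)))) := hstend.max h2
    rw [max_eq_right ((hQ.maps Ψ hΨM).nonneg (x - c))] at hmax
    have h1' : Tendsto (fun j => max (YG.stepf (bs (σ j)) (x₁ - θ (σ j)) x)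
        (Q (A (σ j)) (x - c))) atTop (𝓝 (Ψ x)) := by
      refine h1.congr (fun j => ?_)
      exact hAeq (σ j) x
    exact tendsto_nhds_unique h1' hmax
  have heq : ∀ x, Ψ x = YG.Rop Q c Ψ x :=
    eq_of_ae_eq hΨM (isM_Rop hQ c hΨM) haeq
  -- ## two sample points
  obtain ⟨xl, hxlD, hxl1, hxl0⟩ := dense_of_ae hae3 (show (-1:ℝ) < 0 by norm_num)
  obtain ⟨xh, hxhD, hxh0, hxh1⟩ := dense_of_ae hae3 (show (0:ℝ) < 1 by norm_num)
  have hΨlow : Ψ xl ≤ μ :=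
    le_of_tendsto hxlD (Eventually.of_forall (fun j => hAlow (σ j) xl hxl0))
  have hΨhigh : μ ≤ Ψ xh :=
    ge_of_tendsto hxhD (Eventually.of_forall (fun j => hAhigh (σ j) xh hxh0))
  -- ## the limit at -∞ is 0
  have hbddb : BddBelow (Set.range Ψ) := ⟨0, by rintro r ⟨y, rfl⟩; exact hΨM.nonneg y⟩
  have hbdda : BddAbove (Set.range Ψ) := ⟨1, by rintro r ⟨y, rfl⟩; exact hΨM.le_one y⟩
  set m := ⨅ y, Ψ y with hmdef
  have hm0 : 0 ≤ m := le_ciInf (fun y => hΨM.nonneg y)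
  have hmμ : m ≤ μ := le_trans (ciInf_le hbddb xl) hΨlow
  have hmeq : m = 0 := by
    by_contra hne
    have hmpos : 0 < m := lt_of_le_of_ne hm0 (Ne.symm hne)
    have hm1 : m < 1 := lt_of_le_of_lt hmμ hμ1
    have hkey : ∀ y, gQ Q m ≤ Ψ y := by
      intro y
      rw [heq y]
      show gQ Q m ≤ Q Ψ (y - c)
      have h1 : Q (fun _ => m) (y - c) ≤ Q Ψ (y - c) :=
        hQ.mono _ _ (isM_const hm0 hm1.le) hΨM (fun z => ciInf_le hbddb z) (y - c)
      rw [q_const_apply hQ hm0 hm1.le (y - c)] at h1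
      exact h1
    have h2 : gQ Q m ≤ m := le_ciInf hkey
    have h3 : m < gQ Q m := gQ_lt hQ hmpos hm1
    linarith
  have htb : Tendsto Ψ atBot (𝓝 0) := by
    have h := tendsto_atBot_ciInf hΨM.1 hbddb
    rwa [← hmdef, hmeq] at h
  -- ## the limit at +∞ is 1
  set M := ⨆ y, Ψ y with hMdef
  have hM1 : M ≤ 1 := ciSup_le (fun y => hΨM.le_one y)
  have hMμ : μ ≤ M := le_trans hΨhigh (le_ciSup hbdda xh)
  have hM0 : 0 < M := lt_of_lt_of_le hμ0 hMμ
  have hMeq : M = 1 := by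
    by_contra hne
    have hMlt : M < 1 := lt_of_le_of_ne hM1 hne
    have hgs : ∀ s, 0 < s → s < M → gQ Q s ≤ M := by
      intro s hs0 hsM
      have hs1 : s < 1 := lt_trans hsM hMlt
      obtain ⟨y, hy⟩ := (lt_ciSup_iff hbdda).1 hsM
      have hstepΨ : ∀ w, YG.stepf s y w ≤ Ψ w := by
        intro w
        show (if y < w then s else 0) ≤ Ψ w
        split
        · exact le_trans hy.le (hΨM.1 (le_of_lt (by assumption)))
        · exact hΨM.nonneg w
      have hMe : ∀ ε : ℝ, 0 < ε → gQ Q s - ε ≤ M := by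
        intro ε hε
        obtain ⟨τ, hτ⟩ := rung hQ c hs0 hs1 hε
        have h1 : gQ Q s - ε ≤ YG.Rop Q c (YG.stepf s y) (y + τ + 1) :=
          hτ y (y + τ + 1) (by linarith)
        have h2 : YG.Rop Q c (YG.stepf s y) (y + τ + 1) ≤ YG.Rop Q c Ψ (y + τ + 1) :=
          Rop_mono hQ c (isM_stepf hs0.le hs1.le y) hΨM hstepΨ (y + τ + 1)
        have h3 : YG.Rop Q c Ψ (y + τ + 1) = Ψ (y + τ + 1) := (heq (y + τ + 1)).symm
        have h4 : Ψ (y + τ + 1) ≤ M := le_ciSup hbdda (y + τ + 1)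
        linarith
      by_contra hcon
      push_neg at hcon
      have := hMe ((gQ Q s - M)/2) (by linarith)
      linarith
    -- the levels s k := M - min (M/2) (1/(k+1)) tend to M
    set sk : ℕ → ℝ := fun k => M - min (M/2) (1/((k:ℝ)+1)) with hskdef
    have hsk0 : ∀ k, 0 < sk k := by
      intro k
      have h1 : min (M/2) (1/((k:ℝ)+1)) ≤ M/2 := min_le_left _ _
      show 0 < M - min (M/2) (1/((k:ℝ)+1))
      linarith
    have hskM : ∀ k, sk k < M := by
      intro k
      have h1 : (0:ℝ) < 1/((k:ℝ)+1) := by positivity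
      have h2 : 0 < min (M/2) (1/((k:ℝ)+1)) := lt_min (by linarith) h1
      show M - min (M/2) (1/((k:ℝ)+1)) < M
      linarith
    have hsktend : Tendsto sk atTop (𝓝 M) := by
      have hmin : Tendsto (fun k : ℕ => min (M/2) (1/((k:ℝ)+1))) atTop (𝓝 0) := by
        refine tendsto_of_tendsto_of_tendsto_of_le_of_le tendsto_const_nhds
          tendsto_one_div_add_atTop_nhds_zero_nat ?_ ?_
        · intro k
          have h1 : (0:ℝ) < 1/((k:ℝ)+1) := by positivity
          exact le_min (by linarith) h1.le
        · exact fun k => min_le_right _ _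
      have h := Tendsto.sub (tendsto_const_nhds : Tendsto (fun _ : ℕ => M) atTop (𝓝 M)) hmin
      rw [sub_zero] at h
      exact h
    have hgtend : Tendsto (fun k => gQ Q (sk k)) atTop (𝓝 (gQ Q M)) :=
      gQ_tendsto hQ (fun k => (hsk0 k).le) (fun k => (lt_of_lt_of_le (hskM k) hM1).le)
        hM0.le hM1 hsktend
    have h5 : gQ Q M ≤ M :=
      le_of_tendsto hgtend (Eventually.of_forall (fun k => hgs (sk k) (hsk0 k) (hskM k)))
    have h6 : M < gQ Q M := gQ_lt hQ hM0 hMlt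
    linarith
  have htt : Tendsto Ψ atTop (𝓝 1) := by
    have h := tendsto_atTop_ciSup hΨM.1 hbdda
    rwa [← hMdef, hMeq] at h
  exact ⟨Ψ, hΨM, fun x => (heq x).symm, htb, htt⟩
end

section
/- Let (u_k)_{k∈ℕ} be a sequence of monotone nondecreasing functions on ℝ that converges Lebesgue-almost everywhere to a continuous function u on ℝ. Then (u_k) converges to u uniformly on every bounded interval. -/
open MeasureTheory Filter Topology

set_option maxHeartbeats 1000000 in
/-- Lemma 8: a sequence of monotone nondecreasing functions converging almost everywhere
to a continuous function converges uniformly on every bounded interval. -/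
theorem lemma8 (uk : ℕ → ℝ → ℝ) (u : ℝ → ℝ)
    (hmono : ∀ k, Monotone (uk k)) (hu : Continuous u)
    (hae : ∀ᵐ x : ℝ ∂volume, Tendsto (fun k => uk k x) atTop (𝓝 (u x))) :
    ∀ a b : ℝ, TendstoUniformlyOn uk u atTop (Set.Icc a b) := by
  classical
  intro a b
  rcases le_or_gt a b with hab | hab
  swap
  · rw [Set.Icc_eq_empty hab.not_ge]; exact tendstoUniformlyOn_empty
  rw [Metric.tendstoUniformlyOn_iff]
  intro ε hε
  -- uniform continuity of u on [a-2, b+1]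
  have hucont : UniformContinuousOn u (Set.Icc (a-2) (b+1)) :=
    (isCompact_Icc).uniformContinuousOn_of_continuous hu.continuousOn
  obtain ⟨δ, hδ, hδu⟩ := (Metric.uniformContinuousOn_iff).mp hucont (ε/3) (by positivity)
  set c := a - 1 with hc
  set h : ℝ := min δ 1 / 2 with hh
  have hh0 : 0 < h := by positivity
  have hh1 : h ≤ 1/2 := by
    rw [hh]; nlinarith [min_le_right δ 1]
  have h2δ : 2 * h ≤ δ := by
    rw [hh]; nlinarith [min_le_left δ 1]
  -- density of the convergence set
  have hconv : ∀ t : ℝ, ∃ x ∈ Set.Ioo t (t + h),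
      Tendsto (fun k => uk k x) atTop (𝓝 (u x)) := by
    intro t
    by_contra hcon
    push_neg at hcon
    have hsub : Set.Ioo t (t+h) ⊆ {x | ¬ Tendsto (fun k => uk k x) atTop (𝓝 (u x))} :=
      fun x hx => hcon x hx
    have h0 : volume {x | ¬ Tendsto (fun k => uk k x) atTop (𝓝 (u x))} = 0 := ae_iff.mp hae
    have := measure_mono (μ := volume) hsub
    rw [h0, le_zero_iff, Real.volume_Ioo] at this
    simp only [ENNReal.ofReal_eq_zero] at this
    linarith
  choose y hy hyT using fun i : ℕ => hconv (c + i * h)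
  have hylb : ∀ i : ℕ, c + i * h < y i := fun i => (hy i).1
  have hyub : ∀ i : ℕ, y i < c + i * h + h := fun i => (hy i).2
  set N : ℕ := ⌈(b - c) / h⌉₊ with hN
  have hbc : (0:ℝ) ≤ b - c := by rw [hc]; linarith
  have hNh : b ≤ c + N * h := by
    have := Nat.le_ceil ((b - c) / h)
    rw [div_le_iff₀ hh0] at this
    linarith
  have hNh' : c + (N+1) * h ≤ b + 1 := by
    have h1 : (N:ℝ) < (b - c)/h + 1 := by
      have := Nat.ceil_lt_add_one (div_nonneg hbc hh0.le)
      rw [← hN] at this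
      exact_mod_cast this
    have h3 : ((b-c)/h + 1) * h = b - c + h := by field_simp
    have h2 : (N:ℝ) * h < b - c + h := by nlinarith
    nlinarith
  -- grid points lie in the compact interval
  have hyIcc : ∀ i : ℕ, i ≤ N → y i ∈ Set.Icc (a-2) (b+1) := by
    intro i hi
    have hi' : (i:ℝ) ≤ N := by exact_mod_cast hi
    have h1 := hylb i
    have h2 := hyub i
    have h3 : (0:ℝ) ≤ (i:ℝ) * h := by positivity
    constructor
    · rw [hc] at h1; linarith
    · have h4 : (i:ℝ)*h + h ≤ ((N:ℝ)+1)*h := by nlinarith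
      linarith
  -- eventually all grid values are close
  have hev : ∀ᶠ k in atTop, ∀ i ∈ Finset.range (N + 1),
      |uk k (y i) - u (y i)| < ε/3 := by
    rw [eventually_all_finset]
    intro i _
    have := Metric.tendsto_nhds.mp (hyT i) (ε/3) (by positivity)
    filter_upwards [this] with k hk
    rwa [Real.dist_eq] at hk
  filter_upwards [hev] with k hk
  intro x hx
  have hP0 : y 0 ≤ x := by
    have := hyub 0
    have hx1 := hx.1
    push_cast at this
    rw [hc] at this
    linarith
  set i := Nat.findGreatest (fun j => y j ≤ x) N with hi
  have hiP : y i ≤ x := Nat.findGreatest_spec (P := fun j => y j ≤ x) (Nat.zero_le N) hP0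
  have hiN : i ≤ N := Nat.findGreatest_le N
  have hilt : i < N := by
    rcases lt_or_eq_of_le hiN with h' | h'
    · exact h'
    · exfalso
      have hbN : b < y N := lt_of_le_of_lt hNh (hylb N)
      rw [h'] at hiP
      have := hx.2
      linarith
  have hxlt : x < y (i+1) := by
    have h' := Nat.findGreatest_is_greatest (P := fun j => y j ≤ x)
      (Nat.lt_succ_self i) hilt
    exact lt_of_not_ge h'
  -- distance bounds
  have hgap : y (i+1) - y i < 2 * h := by
    have h1 := hylb i
    have h2 := hyub (i+1)
    push_cast at h2
    nlinarith
  have hd1 : dist x (y i) < δ := by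
    rw [Real.dist_eq, abs_of_nonneg (by linarith)]
    linarith
  have hd2 : dist x (y (i+1)) < δ := by
    rw [Real.dist_eq, abs_of_nonpos (by linarith)]
    linarith
  have hxIcc : x ∈ Set.Icc (a-2) (b+1) := ⟨by linarith [hx.1], by linarith [hx.2]⟩
  have hu1 : dist (u x) (u (y i)) < ε/3 :=
    hδu x hxIcc (y i) (hyIcc i (by omega)) hd1
  have hu2 : dist (u x) (u (y (i+1))) < ε/3 :=
    hδu x hxIcc (y (i+1)) (hyIcc (i+1) (by omega)) hd2
  rw [Real.dist_eq] at hu1 hu2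
  have hk1 : |uk k (y i) - u (y i)| < ε/3 := hk i (Finset.mem_range.mpr (by omega))
  have hk2 : |uk k (y (i+1)) - u (y (i+1))| < ε/3 := hk (i+1) (Finset.mem_range.mpr (by omega))
  have hm1 : uk k (y i) ≤ uk k x := hmono k hiP
  have hm2 : uk k x ≤ uk k (y (i+1)) := hmono k hxlt.le
  rw [Real.dist_eq, abs_sub_lt_iff]
  rw [abs_sub_lt_iff] at hu1 hu2 hk1 hk2
  constructor <;> linarith [hu1.1, hu1.2, hu2.1, hu2.2, hk1.1, hk1.2, hk2.1, hk2.2]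
end

section
/- Let Q₀ : ℳ → ℳ satisfy parts (i), (ii) and (iii) of Hypotheses 1. Suppose a sequence (u_k)_{k∈ℕ} ⊂ ℳ converges to u ∈ ℳ Lebesgue-almost everywhere. Then lim_{k→∞} (Q₀[u_k])(x) = (Q₀[u])(x) holds for every point x ∈ ℝ at which Q₀[u] is continuous. -/
open MeasureTheory Filter Topology

/-- Parts (i), (ii), (iii) of Hypotheses 1 for a map `Q : ℳ → ℳ`. -/
structure Hyp1iii (Q : (ℝ → ℝ) → (ℝ → ℝ)) : Prop where
  maps : ∀ u, IsM u → IsM (Q u)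
  cont : ∀ (uk : ℕ → ℝ → ℝ) (u : ℝ → ℝ), (∀ k, IsM (uk k)) → IsM u →
    (∀ a b : ℝ, TendstoUniformlyOn uk u atTop (Set.Icc a b)) →
    ∀ᵐ x : ℝ ∂volume, Tendsto (fun k => Q (uk k) x) atTop (𝓝 (Q u x))
  mono : ∀ u₁ u₂, IsM u₁ → IsM u₂ → u₁ ≤ u₂ → Q u₁ ≤ Q u₂
  transl : ∀ (x₀ : ℝ) (u : ℝ → ℝ), IsM u →
    Q (fun x => u (x - x₀)) = fun x => Q u (x - x₀)

lemma dense_of_ae {D : Set ℝ} (hD : ∀ᵐ x : ℝ ∂volume, x ∈ D) :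
    ∀ a b : ℝ, a < b → (D ∩ Set.Ioo a b).Nonempty := by
  intro a b hab
  by_contra h
  rw [Set.not_nonempty_iff_eq_empty] at h
  have hsub : Set.Ioo a b ⊆ {x : ℝ | ¬ x ∈ D} := by
    intro x hx hxD
    exact Set.eq_empty_iff_forall_notMem.mp h x ⟨hxD, hx⟩
  have h0 : volume (Set.Ioo a b) = 0 :=
    measure_mono_null hsub (ae_iff.mp hD)
  rw [Real.volume_Ioo] at h0
  simp [ENNReal.ofReal_eq_zero, sub_nonpos] at h0
  linarith

lemma exists_grid (D : Set ℝ) (hD : ∀ a b : ℝ, a < b → (D ∩ Set.Ioo a b).Nonempty)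
    (lo hi δ : ℝ) (hδ : 0 < δ) :
    ∃ G : Finset ℝ, (∀ p ∈ G, p ∈ D) ∧
      ∀ y, lo ≤ y → y ≤ hi → ∃ p ∈ G, y ≤ p ∧ p ≤ y + δ := by
  have hhalf : 0 < δ / 2 := by linarith
  have hchoice : ∀ i : ℕ, ∃ p, p ∈ D ∩ Set.Ioo (lo + i * (δ/2)) (lo + i * (δ/2) + δ/2) := by
    intro i
    exact hD _ _ (by linarith)
  choose p hp using hchoice
  set N : ℕ := ⌈(hi - lo) / (δ/2)⌉₊ with hN
  refine ⟨(Finset.range (N+1)).image p, ?_, ?_⟩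
  · intro q hq
    simp only [Finset.mem_image, Finset.mem_range] at hq
    obtain ⟨i, _, rfl⟩ := hq
    exact (hp i).1
  · intro y hlo hhi
    set i : ℕ := ⌈(y - lo) / (δ/2)⌉₊ with hi_def
    have hiN : i ≤ N := Nat.ceil_le_ceil (by gcongr <;> linarith)
    have h1 : (y - lo) / (δ/2) ≤ (i : ℝ) := Nat.le_ceil _
    have h2 : (i : ℝ) < (y - lo) / (δ/2) + 1 := by
      exact Nat.ceil_lt_add_one (div_nonneg (by linarith) hhalf.le)
    have hq1 : y ≤ lo + i * (δ/2) := by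
      have := (div_le_iff₀ hhalf).mp h1
      linarith
    have hq2 : lo + i * (δ/2) < y + δ/2 := by
      have : (i : ℝ) * (δ/2) < ((y - lo) / (δ/2) + 1) * (δ/2) := by
        apply mul_lt_mul_of_pos_right h2 hhalf
      rw [add_mul, div_mul_cancel₀ _ (ne_of_gt hhalf)] at this
      linarith
    refine ⟨p i, ?_, ?_, ?_⟩
    · exact Finset.mem_image_of_mem p (Finset.mem_range.mpr (Nat.lt_succ_of_le hiN))
    · have := (hp i).2.1
      linarith
    · have := (hp i).2.2
      linarith

noncomputable def wlow (u : ℝ → ℝ) (n : ℕ) (y : ℝ) : ℝ :=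
  if y ≤ -((n:ℝ)+1) then 0 else max (u y - 1/((n:ℝ)+1)) 0

noncomputable def whigh (u : ℝ → ℝ) (n : ℕ) (y : ℝ) : ℝ :=
  if ((n:ℝ)+1) < y then 1 else min (u y + 1/((n:ℝ)+1)) 1

lemma isM_translate {u : ℝ → ℝ} (hu : IsM u) (d : ℝ) : IsM (fun x => u (x - d)) := by
  obtain ⟨hm, hc, hb⟩ := hu
  refine ⟨fun a b hab => hm (by linarith), fun x => ?_, fun x => hb _⟩
  refine ContinuousWithinAt.comp (hc (x-d)) ?_ ?_
  · exact (continuous_id.sub continuous_const).continuousWithinAt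
  · intro y hy
    simp only [Set.mem_Iic] at *
    linarith

lemma isM_wlow {u : ℝ → ℝ} (hu : IsM u) (n : ℕ) : IsM (wlow u n) := by
  obtain ⟨hm, hc, hb⟩ := hu
  have hδ : (0:ℝ) < 1/((n:ℝ)+1) := by positivity
  refine ⟨?_, ?_, ?_⟩
  · intro a b hab
    unfold wlow
    by_cases hb' : b ≤ -((n:ℝ)+1)
    · rw [if_pos (le_trans hab hb'), if_pos hb']
    · rw [if_neg hb']
      by_cases ha' : a ≤ -((n:ℝ)+1)
      · rw [if_pos ha']; exact le_max_right _ _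
      · rw [if_neg ha']; exact max_le_max (by linarith [hm hab]) le_rfl
  · intro x
    by_cases hx : x ≤ -((n:ℝ)+1)
    · apply ContinuousWithinAt.congr (continuousWithinAt_const (b := (0:ℝ)))
      · intro y hy
        rw [wlow, if_pos (le_trans (Set.mem_Iic.mp hy) hx)]
      · rw [wlow, if_pos hx]
    · push_neg at hx
      have hbase : ContinuousWithinAt (fun y => max (u y - 1/((n:ℝ)+1)) 0) (Set.Iic x) x :=
        ((hc x).sub continuousWithinAt_const).max continuousWithinAt_const
      apply hbase.congr_of_eventuallyEq
      · have : Set.Ioi (-((n:ℝ)+1)) ∈ 𝓝[Set.Iic x] x :=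
          nhdsWithin_le_nhds (Ioi_mem_nhds hx)
        filter_upwards [this] with y hy
        rw [wlow, if_neg (not_le.mpr hy)]
      · rw [wlow, if_neg (not_le.mpr hx)]
  · intro x
    unfold wlow
    split
    · simp
    · constructor
      · exact le_max_right _ _
      · exact max_le (by linarith [(hb x).2]) zero_le_one

lemma isM_whigh {u : ℝ → ℝ} (hu : IsM u) (n : ℕ) : IsM (whigh u n) := by
  obtain ⟨hm, hc, hb⟩ := hu
  have hδ : (0:ℝ) < 1/((n:ℝ)+1) := by positivity
  refine ⟨?_, ?_, ?_⟩
  · intro a b hab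
    unfold whigh
    by_cases ha' : ((n:ℝ)+1) < a
    · rw [if_pos ha', if_pos (lt_of_lt_of_le ha' hab)]
    · rw [if_neg ha']
      by_cases hb' : ((n:ℝ)+1) < b
      · rw [if_pos hb']; exact min_le_right _ _
      · rw [if_neg hb']; exact min_le_min (by linarith [hm hab]) le_rfl
  · intro x
    by_cases hx : ((n:ℝ)+1) < x
    · apply ContinuousWithinAt.congr_of_eventuallyEq (continuousWithinAt_const (b := (1:ℝ)))
      · have : Set.Ioi ((n:ℝ)+1) ∈ 𝓝[Set.Iic x] x :=
          nhdsWithin_le_nhds (Ioi_mem_nhds hx)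
        filter_upwards [this] with y hy
        rw [whigh, if_pos (Set.mem_Ioi.mp hy)]
      · rw [whigh, if_pos hx]
    · push_neg at hx
      have hbase : ContinuousWithinAt (fun y => min (u y + 1/((n:ℝ)+1)) 1) (Set.Iic x) x :=
        ((hc x).add continuousWithinAt_const).min continuousWithinAt_const
      apply hbase.congr
      · intro y hy
        rw [whigh, if_neg (not_lt.mpr (le_trans (Set.mem_Iic.mp hy) hx))]
      · rw [whigh, if_neg (not_lt.mpr hx)]
  · intro x
    unfold whigh
    split
    · simp
    · constructor
      · exact le_min (by linarith [(hb x).1]) zero_le_one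
      · exact min_le_right _ _

lemma tendsto_one_div_nat : Tendsto (fun n : ℕ => 1/((n:ℝ)+1)) atTop (𝓝 0) :=
  tendsto_one_div_add_atTop_nhds_zero_nat

lemma unif_wlow {u : ℝ → ℝ} (hu : IsM u) (a b : ℝ) :
    TendstoUniformlyOn (fun n => wlow u n) u atTop (Set.Icc a b) := by
  rw [Metric.tendstoUniformlyOn_iff]
  intro ε hε
  have h1 : ∀ᶠ n : ℕ in atTop, 1/((n:ℝ)+1) < ε :=
    (tendsto_one_div_nat.eventually (gt_mem_nhds hε))
  have h2 : ∀ᶠ n : ℕ in atTop, -((n:ℝ)+1) < a := by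
    have : Tendsto (fun n : ℕ => -((n:ℝ)+1)) atTop atBot := by
      apply tendsto_neg_atBot_iff.mpr
      exact tendsto_atTop_add_const_right _ _ tendsto_natCast_atTop_atTop
    exact this.eventually (eventually_lt_atBot a)
  filter_upwards [h1, h2] with n hn1 hn2 y hy
  have hδ : (0:ℝ) < 1/((n:ℝ)+1) := by positivity
  rw [wlow, if_neg (not_le.mpr (lt_of_lt_of_le hn2 hy.1))]
  rw [Real.dist_eq, abs_sub_lt_iff]
  have h0 := (hu.2.2 y).1
  constructor
  · have : max (u y - 1/((n:ℝ)+1)) 0 ≥ u y - 1/((n:ℝ)+1) := le_max_left _ _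
    linarith
  · have : max (u y - 1/((n:ℝ)+1)) 0 ≤ u y := max_le (by linarith) h0
    linarith

lemma unif_whigh {u : ℝ → ℝ} (hu : IsM u) (a b : ℝ) :
    TendstoUniformlyOn (fun n => whigh u n) u atTop (Set.Icc a b) := by
  rw [Metric.tendstoUniformlyOn_iff]
  intro ε hε
  have h1 : ∀ᶠ n : ℕ in atTop, 1/((n:ℝ)+1) < ε :=
    (tendsto_one_div_nat.eventually (gt_mem_nhds hε))
  have h2 : ∀ᶠ n : ℕ in atTop, b < ((n:ℝ)+1) := by
    have : Tendsto (fun n : ℕ => ((n:ℝ)+1)) atTop atTop :=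
      tendsto_atTop_add_const_right _ _ tendsto_natCast_atTop_atTop
    exact this.eventually (eventually_gt_atTop b)
  filter_upwards [h1, h2] with n hn1 hn2 y hy
  have hδ : (0:ℝ) < 1/((n:ℝ)+1) := by positivity
  rw [whigh, if_neg (not_lt.mpr (le_trans hy.2 hn2.le))]
  rw [Real.dist_eq, abs_sub_lt_iff]
  have h0 := (hu.2.2 y).2
  constructor
  · have : min (u y + 1/((n:ℝ)+1)) 1 ≥ u y := le_min (by linarith) h0
    linarith
  · have : min (u y + 1/((n:ℝ)+1)) 1 ≤ u y + 1/((n:ℝ)+1) := min_le_left _ _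
    linarith

lemma sandwich {uk : ℕ → ℝ → ℝ} {u : ℝ → ℝ} (huk : ∀ k, IsM (uk k)) (hu : IsM u)
    (hae : ∀ᵐ x : ℝ ∂volume, Tendsto (fun k => uk k x) atTop (𝓝 (u x)))
    (δ c : ℝ) (hδ : 0 < δ) :
    ∀ᶠ k in atTop, ∀ y : ℝ,
      (-c < y → u y - δ ≤ uk k (y + δ)) ∧ (y ≤ c → uk k y ≤ u (y + δ) + δ) := by
  set D : Set ℝ := {x | Tendsto (fun k => uk k x) atTop (𝓝 (u x))} with hD
  have hDd : ∀ a b : ℝ, a < b → (D ∩ Set.Ioo a b).Nonempty := dense_of_ae hae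
  have hbdd : BddAbove (Set.range u) := ⟨1, by rintro _ ⟨y, rfl⟩; exact (hu.2.2 y).2⟩
  have hbddb : BddBelow (Set.range u) := ⟨0, by rintro _ ⟨y, rfl⟩; exact (hu.2.2 y).1⟩
  set M : ℝ := ⨆ y, u y with hM
  set m : ℝ := ⨅ y, u y with hm
  have huM : ∀ y, u y ≤ M := fun y => le_ciSup hbdd y
  have hum : ∀ y, m ≤ u y := fun y => ciInf_le hbddb y
  obtain ⟨b₀, hb₀⟩ : ∃ y, M - δ/2 < u y := by
    apply exists_lt_of_lt_ciSup
    linarith [le_ciSup hbdd (0:ℝ)]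
  obtain ⟨a₀, ha₀⟩ : ∃ y, u y < m + δ/2 := by
    apply exists_lt_of_ciInf_lt
    linarith [ciInf_le hbddb (0:ℝ)]
  obtain ⟨b', hb'D, hb'mem⟩ := hDd b₀ (b₀ + 1) (by linarith)
  obtain ⟨a', ha'D, ha'mem⟩ := hDd (a₀ - 1) a₀ (by linarith)
  set lo : ℝ := min (-c) a' with hlo
  set hi : ℝ := max c b' with hhi
  obtain ⟨G, hGD, hGcov⟩ := exists_grid D hDd lo hi δ hδ
  -- eventually all points of G ∪ {a', b'} are δ/2-close
  have hev : ∀ᶠ k in atTop, ∀ p ∈ insert a' (insert b' G), |uk k p - u p| < δ/2 := by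
    rw [eventually_all_finset]
    intro p hp
    have hpD : p ∈ D := by
      simp only [Finset.mem_insert] at hp
      rcases hp with rfl | rfl | hp
      · exact ha'D
      · exact hb'D
      · exact hGD p hp
    have := (Metric.tendsto_atTop.mp hpD) (δ/2) (by linarith)
    obtain ⟨N, hN⟩ := this
    rw [eventually_atTop]
    exact ⟨N, fun k hk => by simpa [Real.dist_eq] using hN k hk⟩
  filter_upwards [hev] with k hk y
  have hka' : |uk k a' - u a'| < δ/2 := hk a' (Finset.mem_insert_self _ _)
  have hkb' : |uk k b' - u b'| < δ/2 :=
    hk b' (Finset.mem_insert_of_mem (Finset.mem_insert_self _ _))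
  constructor
  · intro hy
    by_cases hyb : b' ≤ y
    · -- tail at +∞
      have h1 : u b₀ ≤ u b' := hu.1 (le_of_lt hb'mem.1)
      have h2 : uk k b' ≤ uk k (y + δ) := (huk k).1 (by linarith)
      have := abs_lt.mp hkb'
      calc u y - δ ≤ M - δ := by linarith [huM y]
        _ ≤ uk k (y + δ) := by linarith
    · push_neg at hyb
      obtain ⟨p, hpG, hyp, hpy⟩ := hGcov y (le_trans (min_le_left _ _) hy.le) (le_trans hyb.le (le_max_right _ _))
      have hkp : |uk k p - u p| < δ/2 :=
        hk p (Finset.mem_insert_of_mem (Finset.mem_insert_of_mem hpG))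
      have h1 : u y ≤ u p := hu.1 hyp
      have h2 : uk k p ≤ uk k (y + δ) := (huk k).1 hpy
      have := abs_lt.mp hkp
      linarith
  · intro hy
    by_cases hya : y ≤ a'
    · have h1 : u a' ≤ u a₀ := hu.1 (le_of_lt ha'mem.2)
      have h2 : uk k y ≤ uk k a' := (huk k).1 hya
      have := abs_lt.mp hka'
      calc uk k y ≤ m + δ := by linarith
        _ ≤ u (y + δ) + δ := by linarith [hum (y + δ)]
    · push_neg at hya
      obtain ⟨p, hpG, hyp, hpy⟩ := hGcov y (le_trans (min_le_right _ _) hya.le) (le_trans hy (le_max_left _ _))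
      have hkp : |uk k p - u p| < δ/2 :=
        hk p (Finset.mem_insert_of_mem (Finset.mem_insert_of_mem hpG))
      have h1 : uk k y ≤ uk k p := (huk k).1 hyp
      have h2 : u p ≤ u (y + δ) := hu.1 hpy
      have := abs_lt.mp hkp
      linarith


/-- Proposition 10. -/
theorem proposition10 (Q : (ℝ → ℝ) → (ℝ → ℝ)) (hQ : Hyp1iii Q)
    (uk : ℕ → ℝ → ℝ) (u : ℝ → ℝ) (huk : ∀ k, IsM (uk k)) (hu : IsM u)
    (hae : ∀ᵐ x : ℝ ∂volume, Tendsto (fun k => uk k x) atTop (𝓝 (u x))) :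
    ∀ x : ℝ, ContinuousAt (Q u) x →
      Tendsto (fun k => Q (uk k) x) atTop (𝓝 (Q u x)) := by
  intro x hx
  have hwlowM : ∀ n, IsM (wlow u n) := fun n => isM_wlow hu n
  have hwhighM : ∀ n, IsM (whigh u n) := fun n => isM_whigh hu n
  have hcontlow : ∀ᵐ y : ℝ ∂volume,
      y ∈ {y : ℝ | Tendsto (fun n => Q (wlow u n) y) atTop (𝓝 (Q u y))} :=
    hQ.cont _ u hwlowM hu (fun a b => unif_wlow hu a b)
  have hconthigh : ∀ᵐ y : ℝ ∂volume,
      y ∈ {y : ℝ | Tendsto (fun n => Q (whigh u n) y) atTop (𝓝 (Q u y))} :=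
    hQ.cont _ u hwhighM hu (fun a b => unif_whigh hu a b)
  rw [Metric.tendsto_atTop]
  intro ε hε
  obtain ⟨η, hη, hball⟩ := Metric.continuousAt_iff.mp hx (ε/3) (by positivity)
  obtain ⟨y₀, hy₀D, hy₀m⟩ := dense_of_ae hcontlow (x - η) x (by linarith)
  obtain ⟨y₁, hy₁D, hy₁m⟩ := dense_of_ae hconthigh x (x + η) (by linarith)
  simp only [Set.mem_setOf_eq] at hy₀D hy₁D
  have hxy₀ : 0 < x - y₀ := by have := hy₀m.2; linarith
  have hxy₁ : 0 < y₁ - x := by have := hy₁m.1; linarith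
  have e1 : ∀ᶠ n : ℕ in atTop, 1/((n:ℝ)+1) < x - y₀ :=
    tendsto_one_div_nat.eventually (gt_mem_nhds hxy₀)
  have e2 : ∀ᶠ n : ℕ in atTop, 1/((n:ℝ)+1) < y₁ - x :=
    tendsto_one_div_nat.eventually (gt_mem_nhds hxy₁)
  have e3 : ∀ᶠ n : ℕ in atTop, dist (Q (wlow u n) y₀) (Q u y₀) < ε/3 :=
    hy₀D (Metric.ball_mem_nhds (Q u y₀) (by positivity))
  have e4 : ∀ᶠ n : ℕ in atTop, dist (Q (whigh u n) y₁) (Q u y₁) < ε/3 :=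
    hy₁D (Metric.ball_mem_nhds (Q u y₁) (by positivity))
  obtain ⟨n, hn1, hn2, hn3, hn4⟩ := (e1.and (e2.and (e3.and e4))).exists
  set δ : ℝ := 1/((n:ℝ)+1) with hδdef
  have hδ : 0 < δ := by positivity
  -- distance estimates at y₀, y₁
  have hd₀ : dist (Q u y₀) (Q u x) < ε/3 := by
    apply hball
    rw [Real.dist_eq, abs_lt]
    constructor <;> [linarith [hy₀m.1]; linarith [hy₀m.2]]
  have hd₁ : dist (Q u y₁) (Q u x) < ε/3 := by
    apply hball
    rw [Real.dist_eq, abs_lt]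
    constructor <;> [linarith [hy₁m.1]; linarith [hy₁m.2]]
  have hlow_pt : Q u x - 2*ε/3 < Q (wlow u n) (x - δ) := by
    have hmonoA : Monotone (Q (wlow u n)) := (hQ.maps _ (hwlowM n)).1
    have h1 : Q (wlow u n) y₀ ≤ Q (wlow u n) (x - δ) := hmonoA (by linarith)
    have h2 := abs_lt.mp (by rw [Real.dist_eq] at hn3; exact hn3)
    have h3 := abs_lt.mp (by rw [Real.dist_eq] at hd₀; exact hd₀)
    linarith
  have hhigh_pt : Q (whigh u n) (x + δ) < Q u x + 2*ε/3 := by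
    have hmonoA : Monotone (Q (whigh u n)) := (hQ.maps _ (hwhighM n)).1
    have h1 : Q (whigh u n) (x + δ) ≤ Q (whigh u n) y₁ := hmonoA (by linarith)
    have h2 := abs_lt.mp (by rw [Real.dist_eq] at hn4; exact hn4)
    have h3 := abs_lt.mp (by rw [Real.dist_eq] at hd₁; exact hd₁)
    linarith
  -- sandwich
  have hsw := sandwich huk hu hae δ ((n:ℝ)+1) hδ
  rw [eventually_atTop] at hsw
  obtain ⟨K, hK⟩ := hsw
  refine ⟨K, fun k hk => ?_⟩
  have hswk := hK k hk
  have hlowle : (fun z => wlow u n (z - δ)) ≤ uk k := by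
    intro z
    simp only [wlow]
    split_ifs with h
    · exact ((huk k).2.2 z).1
    · push_neg at h
      have h' := (hswk (z - δ)).1 h
      rw [sub_add_cancel] at h'
      exact max_le (by linarith) ((huk k).2.2 z).1
  have hhighge : uk k ≤ (fun z => whigh u n (z - (-δ))) := by
    intro z
    simp only [sub_neg_eq_add, whigh]
    split_ifs with h
    · exact ((huk k).2.2 z).2
    · push_neg at h
      have h' := (hswk z).2 (by linarith)
      exact le_min (by linarith) ((huk k).2.2 z).2
  have hql := hQ.mono _ _ (isM_translate (hwlowM n) δ) (huk k) hlowle x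
  have hqh := hQ.mono _ _ (huk k) (isM_translate (hwhighM n) (-δ)) hhighge x
  rw [hQ.transl δ (wlow u n) (hwlowM n)] at hql
  rw [hQ.transl (-δ) (whigh u n) (hwhighM n)] at hqh
  simp only [sub_neg_eq_add] at hqh
  rw [Real.dist_eq, abs_lt]
  constructor
  · linarith
  · linarith
end

section
/- Let (u_k)_{k∈ℕ} be a sequence of monotone nondecreasing functions on ℝ that converges Lebesgue-almost everywhere to a monotone nondecreasing function u on ℝ. Then for every sequence (x_k)_{k∈ℕ} ⊂ ℝ with lim_{k→∞} x_k = 0 and every point x ∈ ℝ at which u is continuous, one has lim_{k→∞} u_k(x − x_k) = u(x). -/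
open MeasureTheory Filter Topology

/-- Lemma 11. -/
theorem lemma11 (uk : ℕ → ℝ → ℝ) (u : ℝ → ℝ)
    (hmono : ∀ k, Monotone (uk k)) (hu : Monotone u)
    (hae : ∀ᵐ x : ℝ ∂volume, Tendsto (fun k => uk k x) atTop (𝓝 (u x)))
    (xk : ℕ → ℝ) (hxk : Tendsto xk atTop (𝓝 0))
    (x : ℝ) (hx : ContinuousAt u x) :
    Tendsto (fun k => uk k (x - xk k)) atTop (𝓝 (u x)) := by
  rw [Metric.tendsto_atTop]
  intro ε hε
  obtain ⟨δ, hδ, hδ'⟩ := Metric.continuousAt_iff.mp hx (ε / 2) (by positivity)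
  set S := {y : ℝ | Tendsto (fun k => uk k y) atTop (𝓝 (u y))} with hSdef
  have hS : volume Sᶜ = 0 := hae
  have key : ∀ c d : ℝ, c < d → ∃ y, y ∈ S ∧ y ∈ Set.Ioo c d := by
    intro c d hcd
    by_contra h
    push_neg at h
    have hsub : Set.Ioo c d ⊆ Sᶜ := fun y hy hyS => (h y hyS) hy
    have h0 := measure_mono_null hsub hS
    rw [Real.volume_Ioo] at h0
    have : d - c ≤ 0 := by
      by_contra hdc
      push_neg at hdc
      exact (ENNReal.ofReal_pos.mpr hdc).ne' h0
    linarith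
  obtain ⟨a, haS, haI⟩ := key (x - δ) x (by linarith)
  obtain ⟨b, hbS, hbI⟩ := key x (x + δ) (by linarith)
  have hua : |u a - u x| < ε / 2 := by
    have := hδ' (show dist a x < δ by rw [Real.dist_eq, abs_lt]; constructor <;> [linarith [haI.1]; linarith [haI.2]])
    rwa [Real.dist_eq] at this
  have hub : |u b - u x| < ε / 2 := by
    have := hδ' (show dist b x < δ by rw [Real.dist_eq, abs_lt]; constructor <;> [linarith [hbI.1]; linarith [hbI.2]])
    rwa [Real.dist_eq] at this
  rw [hSdef] at haS hbS
  rw [Set.mem_setOf_eq, Metric.tendsto_atTop] at haS hbS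
  obtain ⟨Na, hNa⟩ := haS (ε / 2) (by positivity)
  obtain ⟨Nb, hNb⟩ := hbS (ε / 2) (by positivity)
  have hsmall : ∀ᶠ k in atTop, |xk k| < min (x - a) (b - x) := by
    have : (0 : ℝ) < min (x - a) (b - x) := by
      apply lt_min <;> [linarith [haI.2]; linarith [hbI.1]]
    have h2 := Metric.tendsto_atTop.mp hxk _ this
    obtain ⟨N, hN⟩ := h2
    filter_upwards [eventually_ge_atTop N] with k hk
    have := hN k hk
    rwa [Real.dist_eq, sub_zero] at this
  rw [eventually_atTop] at hsmall
  obtain ⟨Nc, hNc⟩ := hsmall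
  refine ⟨max Na (max Nb Nc), fun k hk => ?_⟩
  have hk1 : Na ≤ k := le_trans (le_max_left _ _) hk
  have hk2 : Nb ≤ k := le_trans (le_trans (le_max_left _ _) (le_max_right _ _)) hk
  have hk3 : Nc ≤ k := le_trans (le_trans (le_max_right _ _) (le_max_right _ _)) hk
  have hxkk := hNc k hk3
  rw [abs_lt, lt_min_iff] at hxkk
  have hml : min (x - a) (b - x) ≤ x - a := min_le_left _ _
  have hmr : min (x - a) (b - x) ≤ b - x := min_le_right _ _
  have hab : a ≤ x - xk k ∧ x - xk k ≤ b := by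
    constructor
    · have := hxkk.2.1; linarith
    · have := hxkk.1; linarith
  have hla := hNa k hk1
  have hlb := hNb k hk2
  rw [Real.dist_eq, abs_lt] at hla hlb
  rw [abs_lt] at hua hub
  have h1 : uk k a ≤ uk k (x - xk k) := hmono k hab.1
  have h2 : uk k (x - xk k) ≤ uk k b := hmono k hab.2
  rw [Real.dist_eq, abs_lt]
  constructor <;> [linarith [hla.1]; linarith [hlb.2]]
end

section
/- For each t ∈ [0, +∞) let Q^t be a map from ℳ to ℳ, and suppose the family Q satisfies part (ii) of Hypotheses 5. Then for every c ∈ ℝ, every u ∈ ℳ, and every point x ∈ ℝ at which u is continuous, one has lim_{t→0⁺} (Q^t[u])(x − ct) = u(x). -/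
open MeasureTheory Filter Topology

/-! A nondecreasing function is squeezed between its values at nearby points. Since `Q t u → u`
almost everywhere along every sequence `tₖ → 0`, such points can be found on both sides of `x`
arbitrarily close to it; continuity of `u` at `x` then pins down the limit of
`Q tₖ u (x - c tₖ)`. -/

section MonotoneSqueeze

variable {ι α β : Type*} [TopologicalSpace α] [LinearOrder α] [OrderTopology α]
  [DenselyOrdered α] [TopologicalSpace β] [LinearOrder β] [OrderTopology β]
  {l : Filter ι} {f : ι → α → β} {g : α → β} {x : α} {y : ι → α}

theorem eventually_lt_apply_of_monotone_of_dense [NoMinOrder α]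
    (hf : ∀ᶠ k in l, Monotone (f k)) (hD : Dense {z | Tendsto (f · z) l (𝓝 (g z))})
    (hg : ContinuousAt g x) (hy : Tendsto y l (𝓝 x)) {b : β} (hb : b < g x) :
    ∀ᶠ k in l, b < f k (y k) := by
  obtain ⟨z, hzx, hz⟩ : ∃ z < x, Set.Ioc z x ⊆ {w | b < g w} :=
    exists_Ioc_subset_of_mem_nhds (hg.eventually (lt_mem_nhds hb)) (exists_lt x)
  obtain ⟨w, hwD, hw⟩ := hD.exists_mem_open isOpen_Ioo (Set.nonempty_Ioo.2 hzx)
  have hbw : b < g w := hz (Set.Ioo_subset_Ioc_self hw)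
  filter_upwards [hf, hwD.eventually (lt_mem_nhds hbw), hy.eventually (lt_mem_nhds hw.2)]
    with k hmono hbk hwk
  exact hbk.trans_le (hmono hwk.le)

theorem tendsto_apply_of_monotone_of_dense [NoMinOrder α] [NoMaxOrder α]
    (hf : ∀ᶠ k in l, Monotone (f k)) (hD : Dense {z | Tendsto (f · z) l (𝓝 (g z))})
    (hg : ContinuousAt g x) (hy : Tendsto y l (𝓝 x)) :
    Tendsto (fun k => f k (y k)) l (𝓝 (g x)) :=
  tendsto_order.2
    ⟨fun _ hb => eventually_lt_apply_of_monotone_of_dense hf hD hg hy hb,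
      fun _ hb => eventually_lt_apply_of_monotone_of_dense (α := αᵒᵈ) (β := βᵒᵈ)
        (hf.mono fun _ hk => hk.dual) hD hg hy hb⟩

end MonotoneSqueeze

theorem tendsto_nhdsWithin_of_forall_seq {α β : Type*} [TopologicalSpace α]
    [FirstCountableTopology α] {f : α → β} {l : Filter β} {s : Set α} {a : α}
    (h : ∀ t : ℕ → α, (∀ n, t n ∈ s) → Tendsto t atTop (𝓝 a) → Tendsto (f ∘ t) atTop l) :
    Tendsto f (𝓝[s] a) l := by
  refine tendsto_iff_seq_tendsto.2 fun t ht => ?_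
  obtain ⟨hta, hts⟩ := tendsto_nhdsWithin_iff.1 ht
  obtain ⟨N, hN⟩ := eventually_atTop.1 hts
  exact (tendsto_add_atTop_iff_nat N).1 <|
    h (fun n => t (n + N)) (fun n => hN _ (Nat.le_add_left N n))
      ((tendsto_add_atTop_iff_nat N).2 hta)

/-- Lemma 12. -/
theorem lemma12 (Q : ℝ → (ℝ → ℝ) → (ℝ → ℝ))
    (maps : ∀ t : ℝ, 0 ≤ t → ∀ u, IsM u → IsM (Q t u))
    (cont : ∀ (tk : ℕ → ℝ), (∀ k, 0 ≤ tk k) → Tendsto tk atTop (𝓝 0) →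
      ∀ u, IsM u → ∀ᵐ x : ℝ ∂volume, Tendsto (fun k => Q (tk k) u x) atTop (𝓝 (u x)))
    (c : ℝ) (u : ℝ → ℝ) (hu : IsM u) (x : ℝ) (hx : ContinuousAt u x) :
    Tendsto (fun t : ℝ => Q t u (x - c * t)) (𝓝[>] 0) (𝓝 (u x)) := by
  refine tendsto_nhdsWithin_of_forall_seq fun t ht_pos ht => ?_
  have ht_nonneg : ∀ k, 0 ≤ t k := fun k => (ht_pos k).le
  have hdense := Measure.dense_of_ae (cont t ht_nonneg ht u hu)
  have hmono : ∀ᶠ k in atTop, Monotone (Q (t k) u) :=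
    Eventually.of_forall fun k => (maps (t k) (ht_nonneg k) u hu).1
  have hshift : Tendsto (fun k => x - c * t k) atTop (𝓝 x) := by
    simpa using tendsto_const_nhds.sub (tendsto_const_nhds.mul ht)
  exact tendsto_apply_of_monotone_of_dense hmono hdense hx hshift
end

section
/- If u₀ ∈ L^∞(ℝ) satisfies 0 ≤ u₀ ≤ 1 almost everywhere, then there exists a solution u ∈ C¹([0, +∞), L^∞(ℝ)) to equation (4.1) with u(0) = u₀ such that 0 ≤ u(t) ≤ 1 holds almost everywhere for every t ∈ [0, +∞). -/
open MeasureTheory Filter Topology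

/-- The convolution `(μ*u)(x) = ∫ u(x-y) dμ(y)`. -/
noncomputable def mconv (μ : Measure ℝ) (u : ℝ → ℝ) : ℝ → ℝ :=
  fun x => ∫ y, u (x - y) ∂μ

/-- A monostable nonlinearity: Lipschitz continuous, `f 0 = f 1 = 0`, `f > 0` on `(0,1)`. -/
def MonostableF (f : ℝ → ℝ) : Prop :=
  (∃ K : NNReal, LipschitzWith K f) ∧ f 0 = 0 ∧ f 1 = 0 ∧
    ∀ u : ℝ, 0 < u → u < 1 → 0 < f u

/-- `U : I → L^∞(ℝ)` is a (continuously differentiable) solution of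
`u_t = μ*u - u + f(u)` on the time interval `I`. -/
def IsSolutionOn (μ : Measure ℝ) (f : ℝ → ℝ) (I : Set ℝ)
    (U : ℝ → Lp ℝ ⊤ (volume : Measure ℝ)) : Prop :=
  ∃ D : ℝ → Lp ℝ ⊤ (volume : Measure ℝ),
    ContinuousOn D I ∧
    (∀ t ∈ I, HasDerivWithinAt U (D t) I t) ∧
    (∀ t ∈ I, (D t : ℝ → ℝ) =ᵐ[volume]
      fun x => mconv μ (U t) x - (U t : ℝ → ℝ) x + f ((U t : ℝ → ℝ) x))

open Set
open scoped NNReal ENNReal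

/-!
The argument is a comparison principle obtained by clipping.  Writing the equation as
`u' = R u` with `R u = μ*u - u + f(u)` and `L = K + 1` (`K` the Lipschitz constant of `f`),
the shifted field `R u + L u = μ*u + (f(u) + K u)` maps the order interval `0 ≤ u ≤ 1` of
`L^∞` into `0 ≤ · ≤ L`.  Composing with the lattice projection `u ↦ (u ⊔ 0) ⊓ 1` gives a
globally Lipschitz field `Φ` with `0 ≤ Φ ≤ L` everywhere; after the change of unknown
`V = e^{Lt} U` the equation `U' = Φ U - L U` becomes `V' = e^{Lt} Φ(e^{-Lt} V)`, whose right-hand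
side is bounded on every strip, so Picard–Lindelöf and uniqueness give a global solution.
Along it `V` and `e^{Lt} - V` are nondecreasing, which traps `U` in `[0, 1]`, where the
projection is the identity and `U` solves the original equation.
-/

section ODE

variable {E : Type*} [NormedAddCommGroup E] [NormedSpace ℝ E] [CompleteSpace E]
  {v : ℝ → E → E} {K : ℝ≥0}

theorem exists_forall_mem_Icc_hasDerivWithinAt_of_norm_le
    (hlip : ∀ t, LipschitzWith K (v t)) (hcont : ∀ x, Continuous (v · x))
    {T : ℝ} (hT : 0 ≤ T) {C : ℝ≥0} (hC : ∀ t ∈ Icc 0 T, ∀ x, ‖v t x‖ ≤ C) (x₀ : E) :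
    ∃ α : ℝ → E, α 0 = x₀ ∧ ∀ t ∈ Icc 0 T, HasDerivWithinAt α (v t (α t)) (Icc 0 T) t :=
  IsPicardLindelof.exists_eq_forall_mem_Icc_hasDerivWithinAt₀ (t₀ := ⟨0, le_rfl, hT⟩)
    (x₀ := x₀) (a := C * T.toNNReal)
    { lipschitzOnWith := fun t _ => (hlip t).lipschitzOnWith
      continuousOn := fun x _ => (hcont x).continuousOn
      norm_le := fun t ht x _ => hC t ht x
      mul_max_le := by simp [hT] }

theorem exists_forall_mem_Ici_hasDerivWithinAt
    (hlip : ∀ t, LipschitzWith K (v t)) (hcont : ∀ x, Continuous (v · x))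
    (hbdd : ∀ T, ∃ C : ℝ≥0, ∀ t ∈ Icc 0 T, ∀ x, ‖v t x‖ ≤ C) (x₀ : E) :
    ∃ α : ℝ → E, α 0 = x₀ ∧ ∀ t ∈ Ici 0, HasDerivWithinAt α (v t (α t)) (Ici 0) t := by
  have hloc : ∀ T : ℝ, ∃ α : ℝ → E, α 0 = x₀ ∧
      ∀ t ∈ Icc 0 T, HasDerivWithinAt α (v t (α t)) (Icc 0 T) t := by
    intro T
    rcases le_or_gt 0 T with hT | hT
    · obtain ⟨C, hC⟩ := hbdd T
      exact exists_forall_mem_Icc_hasDerivWithinAt_of_norm_le hlip hcont hT hC x₀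
    · exact ⟨fun _ => x₀, rfl, fun t ht => absurd (ht.1.trans ht.2) hT.not_ge⟩
  choose α hα0 hα using hloc
  have hagree : ∀ S T, EqOn (α S) (α T) (Icc 0 (min S T)) := by
    intro S T
    have hrestr : ∀ R, min S T ≤ R → ContinuousOn (α R) (Icc 0 (min S T)) ∧
        ∀ t ∈ Ico 0 (min S T), HasDerivWithinAt (α R) (v t (α R t)) (Ici t) t := by
      intro R hR
      refine ⟨fun t ht => ((hα R t ⟨ht.1, ht.2.trans hR⟩).continuousWithinAt).mono
        (Icc_subset_Icc_right hR), fun t ht => ?_⟩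
      exact (hα R t ⟨ht.1, ht.2.le.trans hR⟩).mono_of_mem_nhdsWithin
        (Icc_mem_nhdsGE_of_mem ⟨ht.1, ht.2.trans_le hR⟩)
    obtain ⟨hSc, hSd⟩ := hrestr S (min_le_left S T)
    obtain ⟨hTc, hTd⟩ := hrestr T (min_le_right S T)
    exact ODE_solution_unique hlip hSc hSd hTc hTd ((hα0 S).trans (hα0 T).symm)
  refine ⟨fun t => α (t + 1) t, by simpa using hα0 1, fun t ht => ?_⟩
  have hnhds : Ici 0 ∩ Iio (t + 1) ∈ 𝓝[Ici 0] t :=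
    inter_mem_nhdsWithin _ (Iio_mem_nhds (lt_add_one t))
  have hev : (fun s => α (s + 1) s) =ᶠ[𝓝[Ici 0] t] α (t + 1) := by
    filter_upwards [hnhds] with s hs
    exact hagree (s + 1) (t + 1) ⟨hs.1, le_min (lt_add_one s).le hs.2.le⟩
  exact ((hα (t + 1) t ⟨ht, (lt_add_one t).le⟩).mono_of_mem_nhdsWithin
    (mem_of_superset hnhds fun s hs => ⟨hs.1, hs.2.le⟩)).congr_of_eventuallyEq hev rfl

end ODE

theorem Real.hasDerivAt_exp_const_mul (c t : ℝ) :
    HasDerivAt (fun s => Real.exp (c * s)) (Real.exp (c * t) * c) t := by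
  simpa using ((hasDerivAt_id t).const_mul c).exp

theorem LipschitzWith.const_smul_comp_inv_smul {𝕜 E : Type*} [NormedField 𝕜]
    [NormedAddCommGroup E] [NormedSpace 𝕜 E] {Φ : E → E} {K : ℝ≥0} (hΦ : LipschitzWith K Φ)
    {c : 𝕜} (hc : c ≠ 0) : LipschitzWith K fun x => c • Φ (c⁻¹ • x) := by
  refine LipschitzWith.of_dist_le_mul fun x y => ?_
  calc dist (c • Φ (c⁻¹ • x)) (c • Φ (c⁻¹ • y)) ≤ ‖c‖ * (K * (‖c⁻¹‖ * dist x y)) := by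
        rw [dist_smul₀, ← dist_smul₀ c⁻¹]
        gcongr
        exact hΦ.dist_le_mul _ _
    _ = K * dist x y := by
        rw [norm_inv]
        field_simp [norm_ne_zero_iff.2 hc]

section Ordered

variable {E : Type*} [NormedAddCommGroup E] [NormedSpace ℝ E] [CompleteSpace E]
  [PartialOrder E] [IsOrderedAddMonoid E] [IsOrderedModule ℝ E] [ClosedIciTopology E]

theorem monotoneOn_Ici_of_hasDerivWithinAt_nonneg {g g' : ℝ → E} {a : ℝ}
    (hg : ∀ t ∈ Ici a, HasDerivWithinAt g (g' t) (Ici a) t) (hg' : ContinuousOn g' (Ici a))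
    (hpos : ∀ t ∈ Ici a, 0 ≤ g' t) : MonotoneOn g (Ici a) := by
  intro s (hs : a ≤ s) t _ hst
  have hsub : Icc s t ⊆ Ici a := fun x hx => hs.trans hx.1
  have hFTC := intervalIntegral.integral_eq_sub_of_hasDeriv_right_of_le hst
    (fun x hx => (hg x (hsub hx)).continuousWithinAt.mono hsub)
    (fun x hx => (hg x (hsub (Ioo_subset_Icc_self hx))).mono
      fun y (hy : x < y) => hs.trans (hx.1.trans hy).le)
    ((hg'.mono hsub).intervalIntegrable_of_Icc hst)
  rw [← sub_nonneg, ← hFTC, intervalIntegral.integral_of_le hst]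
  exact integral_nonneg_of_ae <| ae_restrict_of_forall_mem measurableSet_Ioc
    fun x hx => hpos x (hsub (Ioc_subset_Icc_self hx))

theorem exp_neg_mul_smul_mem_Icc {Φ : E → E} (hΦ : Continuous Φ) {L : ℝ} {e : E}
    (hΦ0 : ∀ x, 0 ≤ Φ x) (hΦe : ∀ x, Φ x ≤ L • e) {V : ℝ → E}
    (hV : ∀ t ∈ Ici 0,
      HasDerivWithinAt V (Real.exp (L * t) • Φ (Real.exp (-L * t) • V t)) (Ici 0) t)
    (hV0 : V 0 ∈ Icc 0 e) {t : ℝ} (ht : 0 ≤ t) : Real.exp (-L * t) • V t ∈ Icc 0 e := by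
  have hVc : ContinuousOn V (Ici 0) := fun t ht => (hV t ht).continuousWithinAt
  have hVmono : MonotoneOn V (Ici 0) :=
    monotoneOn_Ici_of_hasDerivWithinAt_nonneg hV (by fun_prop)
      fun t _ => smul_nonneg (Real.exp_pos _).le (hΦ0 _)
  have hWmono : MonotoneOn (fun t => Real.exp (L * t) • e - V t) (Ici 0) := by
    refine monotoneOn_Ici_of_hasDerivWithinAt_nonneg (fun t ht =>
      ((Real.hasDerivAt_exp_const_mul L t).smul_const e).hasDerivWithinAt.sub (hV t ht))
      (by fun_prop) fun t _ => ?_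
    rw [mul_smul, ← smul_sub]
    exact smul_nonneg (Real.exp_pos _).le (sub_nonneg.2 (hΦe _))
  have hVt : V 0 ≤ V t := hVmono self_mem_Ici ht ht
  have hWt : e - V 0 ≤ Real.exp (L * t) • e - V t := by
    simpa using hWmono self_mem_Ici ht ht
  have hVe : V t ≤ Real.exp (L * t) • e :=
    (le_sub_comm.1 hWt).trans (sub_le_self _ (sub_nonneg.2 hV0.2))
  refine ⟨smul_nonneg (Real.exp_pos _).le (hV0.1.trans hVt), ?_⟩
  calc Real.exp (-L * t) • V t ≤ Real.exp (-L * t) • Real.exp (L * t) • e :=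
        smul_le_smul_of_nonneg_left hVe (Real.exp_pos _).le
    _ = e := by rw [smul_smul, ← Real.exp_add, neg_mul, neg_add_cancel, Real.exp_zero, one_smul]

end Ordered

section BanachLattice

variable {E : Type*} [NormedAddCommGroup E] [NormedSpace ℝ E] [CompleteSpace E]
  [Lattice E] [HasSolidNorm E] [IsOrderedAddMonoid E] [IsOrderedModule ℝ E]

theorem exists_forall_hasDerivWithinAt_Ici_sub_smul_mem_Icc {Φ : E → E} {K : ℝ≥0}
    (hΦ : LipschitzWith K Φ) {L : ℝ} {e : E} (hΦ0 : ∀ x, 0 ≤ Φ x) (hΦe : ∀ x, Φ x ≤ L • e)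
    {u₀ : E} (hu₀ : u₀ ∈ Icc 0 e) :
    ∃ U : ℝ → E, U 0 = u₀ ∧
      ∀ t ∈ Ici 0, HasDerivWithinAt U (Φ (U t) - L • U t) (Ici 0) t ∧ U t ∈ Icc 0 e := by
  -- `V t = exp (L t) • U t` solves `V' = v t V`, and `v` is bounded on every strip.
  set v : ℝ → E → E := fun t x => Real.exp (L * t) • Φ (Real.exp (-L * t) • x) with hv
  have hlip : ∀ t, LipschitzWith K (v t) := fun t => by
    simpa only [hv, neg_mul, Real.exp_neg] using
      hΦ.const_smul_comp_inv_smul (Real.exp_pos (L * t)).ne'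
  have hcont : ∀ x, Continuous (v · x) := fun x => by
    have := hΦ.continuous
    fun_prop
  have hnorm : ∀ x, ‖Φ x‖ ≤ ‖L • e‖ := fun x => norm_le_norm_of_abs_le_abs <| by
    rw [abs_of_nonneg (hΦ0 x), abs_of_nonneg ((hΦ0 x).trans (hΦe x))]
    exact hΦe x
  have hbdd : ∀ T, ∃ C : ℝ≥0, ∀ t ∈ Icc 0 T, ∀ x, ‖v t x‖ ≤ C := fun T =>
    ⟨⟨Real.exp (|L| * T) * ‖L • e‖, by positivity⟩, fun t ht x => by
      have hLt : L * t ≤ |L| * T := (mul_le_mul_of_nonneg_right (le_abs_self L) ht.1).trans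
        (mul_le_mul_of_nonneg_left ht.2 (abs_nonneg L))
      rw [hv, norm_smul, Real.norm_of_nonneg (Real.exp_pos _).le]
      exact mul_le_mul (Real.exp_le_exp.2 hLt) (hnorm _) (norm_nonneg _) (Real.exp_pos _).le⟩
  obtain ⟨V, hV0, hV⟩ := exists_forall_mem_Ici_hasDerivWithinAt hlip hcont hbdd u₀
  refine ⟨fun t => Real.exp (-L * t) • V t, by simp [hV0], fun t ht => ⟨?_,
    exp_neg_mul_smul_mem_Icc hΦ.continuous hΦ0 hΦe hV (hV0 ▸ hu₀) ht⟩⟩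
  convert ((Real.hasDerivAt_exp_const_mul (-L) t).hasDerivWithinAt).smul (hV t ht) using 1
  · rfl
  simp only [hv, smul_smul, ← Real.exp_add, neg_mul, neg_add_cancel, Real.exp_zero, one_smul]
  module

theorem exists_forall_hasDerivWithinAt_Ici_mem_Icc {R : E → E} {K : ℝ≥0}
    (hR : LipschitzWith K R) {L : ℝ} {e : E}
    (hRL : ∀ x ∈ Icc 0 e, R x + L • x ∈ Icc 0 (L • e)) {u₀ : E} (hu₀ : u₀ ∈ Icc 0 e) :
    ∃ U : ℝ → E, U 0 = u₀ ∧
      ∀ t ∈ Ici 0, HasDerivWithinAt U (R (U t)) (Ici 0) t ∧ U t ∈ Icc 0 e := by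
  set clip : E → E := fun x => (x ⊔ 0) ⊓ e with hclip
  have hclip_mem : ∀ x, clip x ∈ Icc 0 e := fun x =>
    ⟨le_inf le_sup_right (hu₀.1.trans hu₀.2), inf_le_right⟩
  have hclip_lip : LipschitzWith 1 clip := by
    refine LipschitzWith.of_dist_le_mul fun x y => ?_
    rw [NNReal.coe_one, one_mul, dist_eq_norm, dist_eq_norm]
    exact (norm_inf_sub_inf_le_norm _ _ e).trans (norm_sup_sub_sup_le_norm x y 0)
  obtain ⟨U, hU0, hU⟩ := exists_forall_hasDerivWithinAt_Ici_sub_smul_mem_Icc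
    (Φ := fun x => R (clip x) + L • clip x) ((hR.comp hclip_lip).add
      ((lipschitzWith_smul L).comp hclip_lip)) (fun x => (hRL _ (hclip_mem x)).1)
    (fun x => (hRL _ (hclip_mem x)).2) hu₀
  refine ⟨U, hU0, fun t ht => ⟨?_, (hU t ht).2⟩⟩
  have hUt : clip (U t) = U t := by
    simp only [hclip, sup_eq_left.2 (hU t ht).2.1, inf_eq_left.2 (hU t ht).2.2]
  simpa only [hUt, add_sub_cancel_right] using (hU t ht).1

end BanachLattice

namespace MeasureTheory.Lp

variable {α E : Type*} {m : MeasurableSpace α} {μ : Measure α} [NormedAddCommGroup E]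

instance instIsOrderedModuleReal {p : ℝ≥0∞} : IsOrderedModule ℝ (Lp ℝ p μ) :=
  .of_smul_nonneg fun c hc u hu => by
    rw [← coeFn_nonneg] at hu ⊢
    filter_upwards [hu, coeFn_smul c u] with x hx hcx
    rw [hcx]
    exact smul_nonneg hc hx

theorem ae_norm_le_norm_top (u : Lp E ∞ μ) : ∀ᵐ x ∂μ, ‖u x‖ ≤ ‖u‖ := by
  filter_upwards [ae_le_eLpNormEssSup (f := (u : α → E)) (μ := μ)] with x hx
  rw [norm_def, ← toReal_enorm]
  exact ENNReal.toReal_mono (eLpNorm_ne_top u) (hx.trans_eq eLpNorm_exponent_top.symm)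

theorem norm_le_of_ae_bound_top {u : Lp E ∞ μ} {C : ℝ} (hC : 0 ≤ C)
    (h : ∀ᵐ x ∂μ, ‖u x‖ ≤ C) : ‖u‖ ≤ C := by
  rw [norm_def, eLpNorm_exponent_top]
  exact ENNReal.toReal_le_of_le_ofReal hC (eLpNormEssSup_le_of_ae_bound h)

variable (μ) in
noncomputable def constTop (c : E) : Lp E ∞ μ := (memLp_top_const c).toLp _

theorem coeFn_constTop (c : E) : constTop μ c =ᵐ[μ] fun _ => c :=
  MemLp.coeFn_toLp _

theorem smul_constTop (a c : ℝ) : a • constTop μ c = constTop μ (a * c) := by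
  ext1
  filter_upwards [coeFn_smul a (constTop μ c), coeFn_constTop (μ := μ) c,
    coeFn_constTop (μ := μ) (a * c)] with x h1 h2 h3
  rw [h1, h3, Pi.smul_apply, h2, smul_eq_mul]

theorem mem_Icc_zero_constTop_iff {u : Lp ℝ ∞ μ} {c : ℝ} :
    u ∈ Icc 0 (constTop μ c) ↔ ∀ᵐ x ∂μ, 0 ≤ u x ∧ u x ≤ c := by
  rw [mem_Icc, ← coeFn_nonneg, ← coeFn_le, EventuallyLE, EventuallyLE, ← eventually_and]
  refine eventually_congr ?_
  filter_upwards [coeFn_constTop (μ := μ) c] with x hx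
  rw [hx]
  rfl

end MeasureTheory.Lp

local notation "L∞" => Lp ℝ ∞ (volume : Measure ℝ)

theorem ae_ae_sub_of_ae {G : Type*} [MeasurableSpace G] [AddGroup G] [MeasurableAdd₂ G]
    [MeasurableNeg G] {ν : Measure G} [SFinite ν] [ν.IsAddRightInvariant] (μ : Measure G)
    [SFinite μ] {P : G → Prop} (h : ∀ᵐ z ∂ν, P z) : ∀ᵐ x ∂ν, ∀ᵐ y ∂μ, P (x - y) :=
  Measure.ae_ae_of_ae_prod ((quasiMeasurePreserving_sub_of_right_invariant ν μ).ae h)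

section Convolution

variable (μ : Measure ℝ) [IsProbabilityMeasure μ]

theorem ae_integrable_sub (u : L∞) : ∀ᵐ x, Integrable (fun y => u (x - y)) μ := by
  filter_upwards [ae_ae_sub_of_ae μ (Lp.ae_norm_le_norm_top u)] with x hx
  exact (integrable_const ‖u‖).mono' ((Lp.stronglyMeasurable u).comp_measurable
    (measurable_const.sub measurable_id)).aestronglyMeasurable hx

theorem memLp_mconv (u : L∞) : MemLp (mconv μ u) ∞ volume := by
  refine memLp_top_of_bound ?_ ‖u‖ ?_
  · exact ((Lp.stronglyMeasurable u).comp_measurable measurable_sub).integral_prod_right'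
      |>.aestronglyMeasurable
  · filter_upwards [ae_ae_sub_of_ae μ (Lp.ae_norm_le_norm_top u)] with x hx
    simpa [mconv] using norm_integral_le_of_norm_le_const hx

noncomputable def mconvLinfty (u : L∞) : L∞ := (memLp_mconv μ u).toLp _

theorem coeFn_mconvLinfty (u : L∞) : mconvLinfty μ u =ᵐ[volume] mconv μ u :=
  MemLp.coeFn_toLp _

theorem lipschitzWith_mconvLinfty : LipschitzWith 1 (mconvLinfty μ) := by
  refine LipschitzWith.of_dist_le_mul fun u v => ?_
  rw [NNReal.coe_one, one_mul, dist_eq_norm, dist_eq_norm]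
  refine Lp.norm_le_of_ae_bound_top (norm_nonneg _) ?_
  have hsub : ∀ᵐ z, ‖u z - v z‖ ≤ ‖u - v‖ := by
    filter_upwards [Lp.ae_norm_le_norm_top (u - v), Lp.coeFn_sub u v] with z hz h
    rwa [h] at hz
  filter_upwards [Lp.coeFn_sub (mconvLinfty μ u) (mconvLinfty μ v), coeFn_mconvLinfty μ u,
    coeFn_mconvLinfty μ v, ae_integrable_sub μ u, ae_integrable_sub μ v,
    ae_ae_sub_of_ae μ hsub] with x h h₁ h₂ hu hv hx
  rw [h, Pi.sub_apply, h₁, h₂, mconv, mconv, ← integral_sub hu hv]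
  simpa using norm_integral_le_of_norm_le_const hx

theorem mconvLinfty_mem_Icc {u : L∞} {c : ℝ} (hu : u ∈ Icc 0 (Lp.constTop volume c)) :
    mconvLinfty μ u ∈ Icc 0 (Lp.constTop volume c) := by
  rw [Lp.mem_Icc_zero_constTop_iff] at hu ⊢
  filter_upwards [coeFn_mconvLinfty μ u, ae_ae_sub_of_ae μ hu] with x hx hxy
  rw [hx]
  refine ⟨integral_nonneg_of_ae (hxy.mono fun y hy => hy.1), ?_⟩
  simpa [mconv] using integral_mono_of_nonneg (hxy.mono fun y hy => hy.1) (integrable_const c)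
    (hxy.mono fun y hy => hy.2)

end Convolution

section Reaction

theorem add_mul_mem_Icc_of_lipschitzWith {f : ℝ → ℝ} {K : ℝ≥0} (hK : LipschitzWith K f)
    (hf0 : f 0 = 0) (hf1 : f 1 = 0) {s : ℝ} (hs : s ∈ Icc 0 1) : f s + K * s ∈ Icc 0 (K : ℝ) := by
  have h0 := hK.dist_le_mul s 0
  have h1 := hK.dist_le_mul s 1
  rw [Real.dist_eq, Real.dist_eq, hf0, sub_zero, sub_zero, abs_of_nonneg hs.1] at h0
  rw [Real.dist_eq, Real.dist_eq, hf1, sub_zero, abs_of_nonpos (sub_nonpos.2 hs.2)] at h1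
  constructor <;> linarith [neg_abs_le (f s), le_abs_self (f s)]

variable (μ : Measure ℝ) [IsProbabilityMeasure μ] {f : ℝ → ℝ} {K : ℝ≥0}
  (hK : LipschitzWith K f) (hf0 : f 0 = 0)

noncomputable def rhsLinfty (w : L∞) : L∞ := mconvLinfty μ w - w + hK.compLp hf0 w

theorem coeFn_rhsLinfty (w : L∞) :
    rhsLinfty μ hK hf0 w =ᵐ[volume] fun x => mconv μ w x - w x + f (w x) := by
  filter_upwards [Lp.coeFn_add (mconvLinfty μ w - w) (hK.compLp hf0 w),
    Lp.coeFn_sub (mconvLinfty μ w) w, coeFn_mconvLinfty μ w, hK.coeFn_compLp hf0 w]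
    with x h₁ h₂ h₃ h₄
  rw [rhsLinfty, h₁, Pi.add_apply, h₂, Pi.sub_apply, h₃, h₄, Function.comp_apply]

theorem lipschitzWith_rhsLinfty : LipschitzWith (1 + 1 + K) (rhsLinfty μ hK hf0) :=
  ((lipschitzWith_mconvLinfty μ).sub LipschitzWith.id).add (hK.lipschitzWith_compLp hf0)

theorem rhsLinfty_add_smul_mem_Icc (hf1 : f 1 = 0) {w : L∞}
    (hw : w ∈ Icc 0 (Lp.constTop volume 1)) :
    rhsLinfty μ hK hf0 w + ((K : ℝ) + 1) • w ∈ Icc 0 (((K : ℝ) + 1) • Lp.constTop volume 1) := by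
  rw [Lp.smul_constTop, mul_one, Lp.mem_Icc_zero_constTop_iff]
  filter_upwards [Lp.mem_Icc_zero_constTop_iff.1 hw,
    Lp.mem_Icc_zero_constTop_iff.1 (mconvLinfty_mem_Icc μ hw), coeFn_mconvLinfty μ w,
    Lp.coeFn_add (rhsLinfty μ hK hf0 w) (((K : ℝ) + 1) • w), coeFn_rhsLinfty μ hK hf0 w,
    Lp.coeFn_smul ((K : ℝ) + 1) w] with x hwx hcx hmx h₁ h₂ h₃
  rw [hmx] at hcx
  have hreact := add_mul_mem_Icc_of_lipschitzWith hK hf0 hf1 hwx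
  rw [h₁, Pi.add_apply, h₂, h₃, Pi.smul_apply, smul_eq_mul,
    show ∀ m s r : ℝ, m - s + r + (K + 1) * s = m + (r + K * s) by intros; ring]
  constructor <;> linarith [hcx.1, hcx.2, hreact.1, hreact.2]

theorem isSolutionOn_of_hasDerivWithinAt {I : Set ℝ} {U : ℝ → L∞}
    (hU : ∀ t ∈ I, HasDerivWithinAt U (rhsLinfty μ hK hf0 (U t)) I t) : IsSolutionOn μ f I U :=
  ⟨fun t => rhsLinfty μ hK hf0 (U t),
    (lipschitzWith_rhsLinfty μ hK hf0).continuous.comp_continuousOn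
      fun t ht => (hU t ht).continuousWithinAt,
    hU, fun t _ => coeFn_rhsLinfty μ hK hf0 (U t)⟩

end Reaction

/-- Proposition 13, first part. -/
theorem proposition13_first (μ : Measure ℝ) (hμ : μ Set.univ = 1)
    (f : ℝ → ℝ) (hf : MonostableF f)
    (u₀ : Lp ℝ ⊤ (volume : Measure ℝ))
    (h₀ : ∀ᵐ x : ℝ ∂volume, 0 ≤ (u₀ : ℝ → ℝ) x ∧ (u₀ : ℝ → ℝ) x ≤ 1) :
    ∃ U : ℝ → Lp ℝ ⊤ (volume : Measure ℝ),
      IsSolutionOn μ f (Set.Ici 0) U ∧ U 0 = u₀ ∧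
      ∀ t : ℝ, 0 ≤ t →
        ∀ᵐ x : ℝ ∂volume, 0 ≤ (U t : ℝ → ℝ) x ∧ (U t : ℝ → ℝ) x ≤ 1 := by
  have : IsProbabilityMeasure μ := ⟨hμ⟩
  obtain ⟨⟨K, hK⟩, hf0, hf1, -⟩ := hf
  obtain ⟨U, hU0, hU⟩ := exists_forall_hasDerivWithinAt_Ici_mem_Icc
    (lipschitzWith_rhsLinfty μ hK hf0) (fun w hw => rhsLinfty_add_smul_mem_Icc μ hK hf0 hf1 hw)
    (Lp.mem_Icc_zero_constTop_iff.2 h₀)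
  exact ⟨U, isSolutionOn_of_hasDerivWithinAt μ hK hf0 fun t ht => (hU t ht).1, hU0,
    fun t ht => Lp.mem_Icc_zero_constTop_iff.1 (hU t ht).2⟩
end

section
/- Let T ∈ (0, +∞) and let u¹, u² ∈ C¹([0, T], L^∞(ℝ)). Suppose that for every t ∈ [0, T] the inequality (u¹)'(t) − (μ*u¹(t) − u¹(t) + f∘u¹(t)) ≤ (u²)'(t) − (μ*u²(t) − u²(t) + f∘u²(t)) holds almost everywhere in x. If u¹(0, x) ≤ u²(0, x) holds almost everywhere in x, then u¹(T, x) ≤ u²(T, x) holds almost everywhere in x. -/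
open MeasureTheory Filter Topology

open ENNReal
namespace Prop18Aux

lemma linfty_ae_le {α : Type*} [MeasurableSpace α] {ν : Measure α} (h : Lp ℝ ⊤ ν) :
    ∀ᵐ z ∂ν, ‖(h : α → ℝ) z‖ ≤ ‖h‖ := by
  have h1 : ∀ᵐ z ∂ν, (‖(h : α → ℝ) z‖₊ : ℝ≥0∞) ≤ eLpNormEssSup (h : α → ℝ) ν :=
    ae_le_eLpNormEssSup
  have hne : eLpNormEssSup (h : α → ℝ) ν ≠ ⊤ := by
    rw [← eLpNorm_exponent_top]; exact Lp.eLpNorm_ne_top h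
  filter_upwards [h1] with z hz
  have := ENNReal.toReal_mono hne hz
  simpa [Lp.norm_def, eLpNorm_exponent_top] using this

lemma linfty_norm_le {α : Type*} [MeasurableSpace α] {ν : Measure α} (h : Lp ℝ ⊤ ν) {C : ℝ}
    (hC : 0 ≤ C) (hb : ∀ᵐ z ∂ν, ‖(h : α → ℝ) z‖ ≤ C) : ‖h‖ ≤ C := by
  rw [Lp.norm_def, eLpNorm_exponent_top]
  exact ENNReal.toReal_le_of_le_ofReal hC (eLpNormEssSup_le_of_ae_bound hb)

lemma posPart_lip {α : Type*} [MeasurableSpace α] {ν : Measure α} (h₁ h₂ : Lp ℝ ⊤ ν) :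
    ‖Lp.posPart h₁ - Lp.posPart h₂‖ ≤ ‖h₁ - h₂‖ := by
  apply linfty_norm_le _ (norm_nonneg _)
  filter_upwards [Lp.coeFn_posPart h₁, Lp.coeFn_posPart h₂,
    Lp.coeFn_sub (Lp.posPart h₁) (Lp.posPart h₂), Lp.coeFn_sub h₁ h₂,
    linfty_ae_le (h₁ - h₂)] with z e1 e2 e3 e4 e5
  rw [e3, Pi.sub_apply, e1, e2, Real.norm_eq_abs]
  refine le_trans (abs_max_sub_max_le_abs _ _ _) ?_
  rw [← Real.norm_eq_abs]
  calc ‖(h₁ : α → ℝ) z - (h₂ : α → ℝ) z‖ = ‖(h₁ - h₂ : Lp ℝ ⊤ ν) z‖ := by rw [e4]; rfl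
    _ ≤ _ := e5

lemma fubini_null (μ : Measure ℝ) [SFinite μ] {N : Set ℝ} (hN : volume N = 0) :
    ∀ᵐ x : ℝ ∂(volume : Measure ℝ), ∀ᵐ y ∂μ, x - y ∉ N := by
  obtain ⟨N', hsub, hmeas, hN'⟩ := exists_measurable_superset_of_null hN
  have hSm : MeasurableSet {p : ℝ × ℝ | p.1 - p.2 ∈ N'} :=
    hmeas.preimage (measurable_fst.sub measurable_snd)
  have hzero : ((volume : Measure ℝ).prod μ) {p : ℝ × ℝ | p.1 - p.2 ∈ N'} = 0 := by
    rw [Measure.prod_apply_symm hSm]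
    have hsec : ∀ y : ℝ, volume {a : ℝ | a - y ∈ N'} = 0 := by
      intro y
      have he : {a : ℝ | a - y ∈ N'} = (fun x : ℝ => x + (-y)) ⁻¹' N' := by
        ext x; simp [sub_eq_add_neg]
      rw [he, measure_preimage_add_right]
      exact hN'
    simp [hsec]
  have hmain := (Measure.measure_prod_null hSm).1 hzero
  filter_upwards [hmain] with x hx
  have hx' : μ {y : ℝ | x - y ∈ N'} = 0 := hx
  have h2 : ∀ᵐ y ∂μ, x - y ∉ N' := by
    rw [ae_iff]
    simpa using hx'
  filter_upwards [h2] with y hy hmem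
  exact hy (hsub hmem)

end Prop18Aux

namespace Prop18Aux

lemma step_bound (μ : Measure ℝ) [IsProbabilityMeasure μ] {f : ℝ → ℝ} {K : NNReal}
    (hK : LipschitzWith K f) (w₁ w₂ g : Lp ℝ ⊤ (volume : Measure ℝ))
    (hg : ∀ᵐ x : ℝ ∂volume, (g : ℝ → ℝ) x ≤ mconv μ (w₁ : ℝ → ℝ) x - mconv μ (w₂ : ℝ → ℝ) x
      - ((w₁ : ℝ → ℝ) x - (w₂ : ℝ → ℝ) x) + (f ((w₁ : ℝ → ℝ) x) - f ((w₂ : ℝ → ℝ) x)))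
    {τ : ℝ} (hτ : 0 < τ) (hτ1 : τ * ((K : ℝ) + 1) ≤ 1) :
    ‖Lp.posPart (w₁ - w₂ + τ • g)‖ ≤ (1 + τ * ((K : ℝ) + 1)) * ‖Lp.posPart (w₁ - w₂)‖ := by
  set M : ℝ := ‖Lp.posPart (w₁ - w₂)‖ with hMdef
  have hM : 0 ≤ M := norm_nonneg _
  have hvM : ∀ᵐ z : ℝ ∂volume, (w₁ : ℝ → ℝ) z - (w₂ : ℝ → ℝ) z ≤ M := by
    filter_upwards [Lp.coeFn_posPart (w₁ - w₂), Lp.coeFn_sub w₁ w₂,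
      linfty_ae_le (Lp.posPart (w₁ - w₂))] with z e1 e2 e3
    have h1 : (w₁ : ℝ → ℝ) z - (w₂ : ℝ → ℝ) z ≤ max (((w₁ - w₂ : Lp ℝ ⊤ _) : ℝ → ℝ) z) 0 := by
      rw [e2]; exact le_max_left _ _
    have h2 : max (((w₁ - w₂ : Lp ℝ ⊤ _) : ℝ → ℝ) z) 0
        ≤ ‖(Lp.posPart (w₁ - w₂) : ℝ → ℝ) z‖ := by
      rw [e1]; exact le_abs_self _
    exact h1.trans (h2.trans e3)
  -- measurable representatives and full a.e. property
  have m₁ := Lp.aestronglyMeasurable w₁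
  have m₂ := Lp.aestronglyMeasurable w₂
  set P : ℝ → Prop := fun z => (w₁ : ℝ → ℝ) z = m₁.mk _ z ∧ (w₂ : ℝ → ℝ) z = m₂.mk _ z ∧
      (w₁ : ℝ → ℝ) z - (w₂ : ℝ → ℝ) z ≤ M ∧ ‖(w₁ : ℝ → ℝ) z‖ ≤ ‖w₁‖ ∧
      ‖(w₂ : ℝ → ℝ) z‖ ≤ ‖w₂‖ with hP
  have hPae : ∀ᵐ z : ℝ ∂volume, P z := by
    filter_upwards [m₁.ae_eq_mk, m₂.ae_eq_mk, hvM, linfty_ae_le w₁, linfty_ae_le w₂]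
      with z a b c d e
    exact ⟨a, b, c, d, e⟩
  have hNnull : volume {z : ℝ | ¬ P z} = 0 := hPae
  have hfub := fubini_null μ hNnull
  have hconv : ∀ᵐ x : ℝ ∂volume,
      mconv μ (w₁ : ℝ → ℝ) x - mconv μ (w₂ : ℝ → ℝ) x ≤ M := by
    filter_upwards [hfub] with x hx
    have hx' : ∀ᵐ y ∂μ, P (x - y) := by
      filter_upwards [hx] with y hy
      exact not_not.mp hy
    have meas1 : AEStronglyMeasurable (fun y => (w₁ : ℝ → ℝ) (x - y)) μ := by
      refine ⟨fun y => m₁.mk _ (x - y),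
        m₁.stronglyMeasurable_mk.comp_measurable (measurable_const.sub measurable_id), ?_⟩
      filter_upwards [hx'] with y hy; exact hy.1
    have meas2 : AEStronglyMeasurable (fun y => (w₂ : ℝ → ℝ) (x - y)) μ := by
      refine ⟨fun y => m₂.mk _ (x - y),
        m₂.stronglyMeasurable_mk.comp_measurable (measurable_const.sub measurable_id), ?_⟩
      filter_upwards [hx'] with y hy; exact hy.2.1
    have int1 : Integrable (fun y => (w₁ : ℝ → ℝ) (x - y)) μ := by
      refine Integrable.mono' (integrable_const ‖w₁‖) meas1 ?_
      filter_upwards [hx'] with y hy; exact hy.2.2.2.1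
    have int2 : Integrable (fun y => (w₂ : ℝ → ℝ) (x - y)) μ := by
      refine Integrable.mono' (integrable_const ‖w₂‖) meas2 ?_
      filter_upwards [hx'] with y hy; exact hy.2.2.2.2
    have heq : mconv μ (w₁ : ℝ → ℝ) x - mconv μ (w₂ : ℝ → ℝ) x
        = ∫ y, ((w₁ : ℝ → ℝ) (x - y) - (w₂ : ℝ → ℝ) (x - y)) ∂μ :=
      (integral_sub int1 int2).symm
    rw [heq]
    calc ∫ y, ((w₁ : ℝ → ℝ) (x - y) - (w₂ : ℝ → ℝ) (x - y)) ∂μ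
        ≤ ∫ _, M ∂μ := by
          refine integral_mono_ae (int1.sub int2) (integrable_const M) ?_
          filter_upwards [hx'] with y hy; exact hy.2.2.1
      _ = M := by simp
  -- final pointwise bound
  apply linfty_norm_le
  · positivity
  filter_upwards [hg, hvM, hconv, Lp.coeFn_posPart (w₁ - w₂ + τ • g),
    Lp.coeFn_add (w₁ - w₂) (τ • g), Lp.coeFn_smul τ g, Lp.coeFn_sub w₁ w₂]
    with z h1 h2 h3 e1 e2 e3 e4
  rw [e1]
  have hval : ((w₁ - w₂ + τ • g : Lp ℝ ⊤ _) : ℝ → ℝ) z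
      = ((w₁ : ℝ → ℝ) z - (w₂ : ℝ → ℝ) z) + τ * (g : ℝ → ℝ) z := by
    rw [e2]; simp only [Pi.add_apply, e4, Pi.sub_apply]
    rw [e3]; simp [smul_eq_mul]
  rw [hval]
  set a : ℝ := (w₁ : ℝ → ℝ) z - (w₂ : ℝ → ℝ) z with ha
  have hlip : f ((w₁ : ℝ → ℝ) z) - f ((w₂ : ℝ → ℝ) z) ≤ (K : ℝ) * |a| := by
    have := hK.dist_le_mul ((w₁ : ℝ → ℝ) z) ((w₂ : ℝ → ℝ) z)
    rw [Real.dist_eq, Real.dist_eq] at this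
    exact (le_abs_self _).trans this
  have hgz : (g : ℝ → ℝ) z ≤ M - a + (K : ℝ) * |a| := by
    linarith
  have hKnn : (0:ℝ) ≤ (K : ℝ) := K.coe_nonneg
  have hbound : a + τ * (g : ℝ → ℝ) z ≤ (1 + τ * ((K : ℝ) + 1)) * M := by
    rcases le_or_gt a 0 with hle | hpos
    · have habs : |a| = -a := abs_of_nonpos hle
      nlinarith [mul_nonneg hτ.le hM]
    · have habs : |a| = a := abs_of_pos hpos
      have haM : a ≤ M := h2
      nlinarith [mul_nonneg hτ.le hM, mul_nonneg hτ.le hKnn]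
  have hCnn : (0:ℝ) ≤ (1 + τ * ((K : ℝ) + 1)) * M := by positivity
  rw [Real.norm_eq_abs, abs_of_nonneg (le_max_right _ _)]
  exact max_le hbound hCnn

end Prop18Aux

open Prop18Aux Set in
theorem proposition18' (μ : Measure ℝ) (hμ : μ Set.univ = 1)
    (f : ℝ → ℝ) (hf : (∃ K : NNReal, LipschitzWith K f)) (T : ℝ) (hT : 0 < T)
    (u₁ u₂ d₁ d₂ : ℝ → Lp ℝ ⊤ (volume : Measure ℝ))
    (hd₁ : ∀ t ∈ Set.Icc (0 : ℝ) T, HasDerivWithinAt u₁ (d₁ t) (Set.Icc 0 T) t)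
    (hd₂ : ∀ t ∈ Set.Icc (0 : ℝ) T, HasDerivWithinAt u₂ (d₂ t) (Set.Icc 0 T) t)
    (hineq : ∀ t ∈ Set.Icc (0 : ℝ) T, ∀ᵐ x : ℝ ∂volume,
      (d₁ t : ℝ → ℝ) x -
          (mconv μ (u₁ t) x - (u₁ t : ℝ → ℝ) x + f ((u₁ t : ℝ → ℝ) x)) ≤
        (d₂ t : ℝ → ℝ) x -
          (mconv μ (u₂ t) x - (u₂ t : ℝ → ℝ) x + f ((u₂ t : ℝ → ℝ) x)))
    (hinit : ∀ᵐ x : ℝ ∂volume, (u₁ 0 : ℝ → ℝ) x ≤ (u₂ 0 : ℝ → ℝ) x) :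
    ∀ᵐ x : ℝ ∂volume, (u₁ T : ℝ → ℝ) x ≤ (u₂ T : ℝ → ℝ) x := by
  haveI hPM : IsProbabilityMeasure μ := ⟨hμ⟩
  obtain ⟨K, hK⟩ := hf
  set C : ℝ := (K : ℝ) + 1 with hCdef
  have hC0 : 0 < C := by positivity
  set V : ℝ → Lp ℝ ⊤ (volume : Measure ℝ) := fun t => u₁ t - u₂ t with hVdef
  set DD : ℝ → Lp ℝ ⊤ (volume : Measure ℝ) := fun t => d₁ t - d₂ t with hDDdef
  set φ : ℝ → ℝ := fun t => ‖Lp.posPart (V t)‖ with hφdef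
  have hφ0 : ∀ t, 0 ≤ φ t := fun t => norm_nonneg _
  have hVd : ∀ t ∈ Set.Icc (0:ℝ) T, HasDerivWithinAt V (DD t) (Set.Icc 0 T) t :=
    fun t ht => (hd₁ t ht).sub (hd₂ t ht)
  have hVc : ContinuousOn V (Set.Icc 0 T) := fun t ht => (hVd t ht).continuousWithinAt
  have hlipφ : LipschitzWith 1 (fun h : Lp ℝ ⊤ (volume : Measure ℝ) => ‖Lp.posPart h‖) := by
    refine LipschitzWith.of_dist_le_mul fun a b => ?_
    rw [Real.dist_eq, dist_eq_norm, NNReal.coe_one, one_mul]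
    exact (abs_norm_sub_norm_le _ _).trans (posPart_lip a b)
  have hφc : ContinuousOn φ (Set.Icc 0 T) := hlipφ.continuous.comp_continuousOn hVc
  have hφzero : φ 0 = 0 := by
    refine le_antisymm (linfty_norm_le _ le_rfl ?_) (hφ0 0)
    filter_upwards [Lp.coeFn_posPart (V 0), Lp.coeFn_sub (u₁ 0) (u₂ 0), hinit] with z e1 e2 h
    have hV0 : ((V 0 : Lp ℝ ⊤ _) : ℝ → ℝ) z = (u₁ 0 : ℝ → ℝ) z - (u₂ 0 : ℝ → ℝ) z := by
      rw [show V 0 = u₁ 0 - u₂ 0 from rfl, e2]; rfl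
    rw [e1, hV0, Real.norm_eq_abs]
    have : max ((u₁ 0 : ℝ → ℝ) z - (u₂ 0 : ℝ → ℝ) z) 0 = 0 := max_eq_right (by linarith)
    rw [show ((u₁ 0 : ℝ → ℝ) z - (u₂ 0 : ℝ → ℝ) z) ⊔ 0 = (0:ℝ) from this]
    simp
  have key : ∀ t ∈ Set.Icc (0:ℝ) T, φ t ≤ gronwallBound 0 C 0 (t - 0) := by
    apply le_gronwallBound_of_liminf_deriv_right_le hφc
      (f' := fun t => C * φ t) ?_ (le_of_eq hφzero)
      (fun t _ => le_of_eq (add_zero _).symm)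
    intro t ht r hr
    have ht0 : (0:ℝ) ≤ t := ht.1
    have htT : t < T := ht.2
    set c : ℝ := (r - C * φ t) / 2 with hcdef
    have hr' : C * φ t < r := hr
    obtain ⟨q, hq⟩ : ∃ q : ℝ, q = C * φ t := ⟨_, rfl⟩
    rw [← hq] at hr'
    have hc0 : 0 < c := by rw [hcdef, ← hq]; linarith
    have hle : 𝓝[>] t ≤ 𝓝[Set.Icc 0 T] t := by
      rw [← nhdsWithin_Ioc_eq_nhdsGT htT]
      exact nhdsWithin_mono t (fun z hz => ⟨le_trans ht0 hz.1.le, hz.2⟩)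
    have hlo : (fun z => V z - V t - (z - t) • DD t) =o[𝓝[>] t] (fun z => z - t) :=
      (hasDerivWithinAt_iff_isLittleO.mp (hVd t ⟨ht0, htT.le⟩)).mono hle
    have hev1 := hlo.def hc0
    have hev2 : ∀ᶠ z in 𝓝[>] t, z < t + 1 / C :=
      nhdsWithin_le_nhds (eventually_lt_nhds (by linarith [one_div_pos.mpr hC0]))
    have hg' : ∀ᵐ x : ℝ ∂volume, ((DD t : Lp ℝ ⊤ _) : ℝ → ℝ) x ≤
        mconv μ (u₁ t) x - mconv μ (u₂ t) x -
          ((u₁ t : ℝ → ℝ) x - (u₂ t : ℝ → ℝ) x) +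
          (f ((u₁ t : ℝ → ℝ) x) - f ((u₂ t : ℝ → ℝ) x)) := by
      filter_upwards [hineq t ⟨ht0, htT.le⟩, Lp.coeFn_sub (d₁ t) (d₂ t)] with x h e
      have : ((DD t : Lp ℝ ⊤ _) : ℝ → ℝ) x = (d₁ t : ℝ → ℝ) x - (d₂ t : ℝ → ℝ) x := by
        rw [show DD t = d₁ t - d₂ t from rfl, e]; rfl
      rw [this]; linarith
    refine (Filter.Eventually.frequently ?_)
    filter_upwards [hev1, hev2, self_mem_nhdsWithin] with z hz1 hz2 hz3
    have hτ0 : 0 < z - t := sub_pos.mpr hz3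
    have hτC : (z - t) * C ≤ 1 := by
      have : z - t < 1 / C := by linarith
      calc (z - t) * C ≤ (1/C) * C := by nlinarith
        _ = 1 := by field_simp
    have hstep := step_bound μ hK (u₁ t) (u₂ t) (DD t) hg' hτ0 hτC
    have hphiz : φ z ≤ (1 + (z - t) * C) * φ t + c * (z - t) := by
      have htri : φ z - ‖Lp.posPart (V t + (z - t) • DD t)‖ ≤
          ‖Lp.posPart (V z) - Lp.posPart (V t + (z - t) • DD t)‖ :=
        norm_sub_norm_le _ _
      have hpl : ‖Lp.posPart (V z) - Lp.posPart (V t + (z - t) • DD t)‖ ≤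
          ‖V z - (V t + (z - t) • DD t)‖ := posPart_lip _ _
      have herr : ‖V z - (V t + (z - t) • DD t)‖ ≤ c * (z - t) := by
        rw [sub_add_eq_sub_sub]
        calc ‖V z - V t - (z - t) • DD t‖ ≤ c * ‖z - t‖ := hz1
          _ = c * (z - t) := by rw [Real.norm_eq_abs, abs_of_pos hτ0]
      have hstep' : ‖Lp.posPart (V t + (z - t) • DD t)‖ ≤ (1 + (z - t) * C) * φ t := by
        have : V t + (z - t) • DD t = u₁ t - u₂ t + (z - t) • DD t := rfl
        rw [this]; exact hstep
      linarith
    have hfinal : (z - t)⁻¹ * (φ z - φ t) ≤ C * φ t + c := by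
      have h1 : φ z - φ t ≤ (z - t) * (C * φ t) + c * (z - t) := by nlinarith [hφ0 t]
      have h2 : (z - t)⁻¹ * (φ z - φ t) ≤ (z - t)⁻¹ * ((z - t) * (C * φ t) + c * (z - t)) :=
        mul_le_mul_of_nonneg_left h1 (inv_nonneg.mpr hτ0.le)
      calc (z - t)⁻¹ * (φ z - φ t) ≤ (z - t)⁻¹ * ((z - t) * (C * φ t) + c * (z - t)) := h2
        _ = C * φ t + c := by field_simp
    have : C * φ t + c < r := by rw [hcdef, ← hq]; linarith
    linarith
  have hφT : φ T ≤ 0 := by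
    have := key T ⟨hT.le, le_rfl⟩
    rwa [gronwallBound_ε0_δ0] at this
  have hppzero : Lp.posPart (V T) = 0 := by
    have : ‖Lp.posPart (V T)‖ = 0 := le_antisymm hφT (norm_nonneg _)
    exact norm_eq_zero.mp this
  have h0 : ⇑(Lp.posPart (V T)) =ᵐ[volume] 0 := by
    rw [hppzero]; exact Lp.coeFn_zero ℝ ⊤ volume
  filter_upwards [h0, Lp.coeFn_posPart (V T), Lp.coeFn_sub (u₁ T) (u₂ T)] with x e0 e1 e2
  have hVT : ((V T : Lp ℝ ⊤ _) : ℝ → ℝ) x = (u₁ T : ℝ → ℝ) x - (u₂ T : ℝ → ℝ) x := by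
    rw [show V T = u₁ T - u₂ T from rfl, e2]; rfl
  have hmax : max ((u₁ T : ℝ → ℝ) x - (u₂ T : ℝ → ℝ) x) 0 = 0 := by
    rw [← hVT, ← e1, e0]; rfl
  have := le_max_left ((u₁ T : ℝ → ℝ) x - (u₂ T : ℝ → ℝ) x) 0
  rw [hmax] at this
  linarith


/-- Proposition 18 (comparison principle). -/
theorem proposition18 (μ : Measure ℝ) (hμ : μ Set.univ = 1)
    (f : ℝ → ℝ) (hf : MonostableF f) (T : ℝ) (hT : 0 < T)
    (u₁ u₂ d₁ d₂ : ℝ → Lp ℝ ⊤ (volume : Measure ℝ))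
    (hc₁ : ContinuousOn d₁ (Set.Icc 0 T)) (hc₂ : ContinuousOn d₂ (Set.Icc 0 T))
    (hd₁ : ∀ t ∈ Set.Icc (0 : ℝ) T, HasDerivWithinAt u₁ (d₁ t) (Set.Icc 0 T) t)
    (hd₂ : ∀ t ∈ Set.Icc (0 : ℝ) T, HasDerivWithinAt u₂ (d₂ t) (Set.Icc 0 T) t)
    (hineq : ∀ t ∈ Set.Icc (0 : ℝ) T, ∀ᵐ x : ℝ ∂volume,
      (d₁ t : ℝ → ℝ) x -
          (mconv μ (u₁ t) x - (u₁ t : ℝ → ℝ) x + f ((u₁ t : ℝ → ℝ) x)) ≤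
        (d₂ t : ℝ → ℝ) x -
          (mconv μ (u₂ t) x - (u₂ t : ℝ → ℝ) x + f ((u₂ t : ℝ → ℝ) x)))
    (hinit : ∀ᵐ x : ℝ ∂volume, (u₁ 0 : ℝ → ℝ) x ≤ (u₂ 0 : ℝ → ℝ) x) :
    ∀ᵐ x : ℝ ∂volume, (u₁ T : ℝ → ℝ) x ≤ (u₂ T : ℝ → ℝ) x :=
  proposition18' μ hμ f hf.1 T hT u₁ u₂ d₁ d₂ hd₁ hd₂ hineq hinit
end

section
/- Let the nonlinearity f be continuously differentiable with f'(α) > 1 for some α ∈ [0,1]. Let ψ ∈ ℳ satisfy lim_{x→−∞} ψ(x) = 0 and lim_{x→+∞} ψ(x) = 1, and suppose that u(t,x) := ψ(x) is a standing wave solution to equation (4.1), i.e. (μ*ψ)(x) − ψ(x) + f(ψ(x)) = 0 for all x ∈ ℝ. Then ψ is a discontinuous function. -/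
open MeasureTheory Filter Topology

/-!
If ψ were continuous, it would take every value in (0,1). The standing wave equation gives
`f (ψ x) - ψ x = -(μ*ψ)(x)`, and the right-hand side is antitone in `x` because ψ is monotone.
But `u ↦ f u - u` is strictly increasing near α, and two values of ψ in `(0,1)` near α then
contradict this antitonicity.
-/

open Set

theorem Continuous.Ioo_subset_range_of_tendsto {X α : Type*} [TopologicalSpace X]
    [PreconnectedSpace X] [LinearOrder α] [TopologicalSpace α] [OrderTopology α]
    {f : X → α} (hf : Continuous f) {l₁ l₂ : Filter X} [l₁.NeBot] [l₂.NeBot] {a b : α}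
    (ha : Tendsto f l₁ (𝓝 a)) (hb : Tendsto f l₂ (𝓝 b)) : Ioo a b ⊆ range f := by
  intro c hc
  obtain ⟨x, hx⟩ := (ha.eventually_lt_const hc.1).exists
  obtain ⟨y, hy⟩ := (hb.eventually_const_lt hc.2).exists
  exact intermediate_value_univ x y hf ⟨hx.le, hy.le⟩

theorem Monotone.subsingleton_inter_range_of_antitone_comp {X α β : Type*} [LinearOrder X]
    [LinearOrder α] [Preorder β] {ψ : X → α} {g : α → β} {S : Set α} (hψ : Monotone ψ)
    (hg : StrictMonoOn g S) (hgψ : Antitone (g ∘ ψ)) : (S ∩ range ψ).Subsingleton := by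
  rintro _ ⟨hxS, x, rfl⟩ _ ⟨hyS, y, rfl⟩
  by_contra hne
  rcases lt_or_gt_of_ne hne with hlt | hlt
  · exact (hg hxS hyS hlt).not_ge (hgψ (hψ.reflect_lt hlt).le)
  · exact (hg hyS hxS hlt).not_ge (hgψ (hψ.reflect_lt hlt).le)

theorem ContDiff.exists_strictMonoOn_Ioo_of_deriv_pos {g : ℝ → ℝ} (hg : ContDiff ℝ 1 g)
    {α : ℝ} (hα : 0 < deriv g α) : ∃ δ > 0, StrictMonoOn g (Ioo (α - δ) (α + δ)) := by
  have hopen : IsOpen {u | 0 < deriv g u} :=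
    isOpen_lt continuous_const (hg.continuous_deriv le_rfl)
  obtain ⟨δ, hδ, hball⟩ := Metric.isOpen_iff.mp hopen α hα
  refine ⟨δ, hδ, strictMonoOn_of_deriv_pos (convex_Ioo _ _) hg.continuous.continuousOn ?_⟩
  intro u hu
  rw [interior_Ioo, ← Real.ball_eq_Ioo] at hu
  exact hball hu

theorem Monotone.mconv {μ : Measure ℝ} [IsFiniteMeasure μ] {u : ℝ → ℝ} (hu : Monotone u)
    {C : ℝ} (hC : ∀ x, ‖u x‖ ≤ C) : Monotone (mconv μ u) := by
  have hint : ∀ x, Integrable (fun y => u (x - y)) μ := fun x =>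
    .of_bound (hu.measurable.comp (measurable_const.sub measurable_id)).aestronglyMeasurable C
      (.of_forall fun y => hC (x - y))
  exact fun x x' hxx' => integral_mono (hint x) (hint x') fun y => hu (sub_le_sub_right hxx' y)

theorem proposition17_general (μ : Measure ℝ) (hμ : μ Set.univ = 1)
    (f : ℝ → ℝ) (hf1 : ContDiff ℝ 1 f)
    (α : ℝ) (hα : α ∈ Set.Icc (0 : ℝ) 1) (hα' : 1 < deriv f α)
    (ψ : ℝ → ℝ) (hψ : IsM ψ)
    (h0 : Tendsto ψ atBot (𝓝 0)) (h1 : Tendsto ψ atTop (𝓝 1))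
    (hstand : ∀ x : ℝ, mconv μ ψ x - ψ x + f (ψ x) = 0) :
    ¬ Continuous ψ := by
  intro hcont
  have : IsFiniteMeasure μ := ⟨by simp [hμ]⟩
  obtain ⟨hmono, -, hrange⟩ := hψ
  have hderiv : 0 < deriv (fun u => f u - u) α := by
    rw [deriv_fun_sub (hf1.differentiable one_ne_zero α) differentiableAt_fun_id, deriv_id'']
    linarith
  have hsmooth : ContDiff ℝ 1 fun u => f u - u := hf1.sub contDiff_id
  obtain ⟨δ, hδ, hstrict⟩ := hsmooth.exists_strictMonoOn_Ioo_of_deriv_pos hderiv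
  have hanti : Antitone ((fun u => f u - u) ∘ ψ) := by
    have hconv := (hmono.mconv (μ := μ) (C := 1) fun x =>
      abs_le.mpr ⟨by linarith [(hrange x).1], (hrange x).2⟩).neg
    convert hconv using 1
    ext x
    simp only [Function.comp_apply]
    linarith [hstand x]
  have hsub := hmono.subsingleton_inter_range_of_antitone_comp hstrict hanti
  have hnontriv : (Ioo (α - δ) (α + δ) ∩ Ioo 0 1).Nontrivial := by
    rw [Ioo_inter_Ioo]
    exact (Ioo_infinite (max_lt (lt_min (by linarith) (by linarith [hα.2]))
      (lt_min (by linarith [hα.1]) one_pos))).nontrivial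
  exact hnontriv.not_subsingleton
    (hsub.anti (inter_subset_inter_right _ (hcont.Ioo_subset_range_of_tendsto h0 h1)))

/-- Proposition 17: a monotone standing wave profile is discontinuous. -/
theorem proposition17 (μ : Measure ℝ) (hμ : μ Set.univ = 1)
    (f : ℝ → ℝ) (hf : MonostableF f) (hf1 : ContDiff ℝ 1 f)
    (α : ℝ) (hα : α ∈ Set.Icc (0 : ℝ) 1) (hα' : 1 < deriv f α)
    (ψ : ℝ → ℝ) (hψ : IsM ψ)
    (h0 : Tendsto ψ atBot (𝓝 0)) (h1 : Tendsto ψ atTop (𝓝 1))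
    (hstand : ∀ x : ℝ, mconv μ ψ x - ψ x + f (ψ x) = 0) :
    ¬ Continuous ψ :=
  proposition17_general μ hμ f hf1 α hα hα' ψ hψ h0 h1 hstand
end
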